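/- arXiv:2411.16090 — 4 statements merged into one kernel-verified Lean document; each statement's English description precedes it below -/
import Mathlib

section
/- Let n ≥ 1, k ∈ ℕ, and t ∈ ℝ with |t| ≥ 1/2. For every Schwartz function u on ℝ^n, setting ũ(z) = e^{−i|z|²/(4t)} u(z), one has the exact equality of module regularity norms ‖u‖_{W^k_{M_t}} = ‖ũ‖_{W^k_{M_{t,0}}}. -/
open MeasureTheory Complex Filter

noncomputable section

abbrev Eucl (n : ℕ) := EuclideanSpace ℝ (Fin n)

/-- Partial derivative in the `j`-th coordinate direction. -/
def pd {n : ℕ} (j : Fin n) (u : Eucl n → ℂ) : Eucl n → ℂ :=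
  fun z => fderiv ℝ u z (EuclideanSpace.single j 1)

/-- `D_{z_j} = -i ∂_{z_j}`. -/
def Dop {n : ℕ} (j : Fin n) (u : Eucl n → ℂ) : Eucl n → ℂ :=
  fun z => -Complex.I * pd j u z

/-- Index type for the modules `M_t`, `M_{t,0}`, `𝒩`. -/
abbrev MIdx (n : ℕ) := Unit ⊕ (Fin n × Fin n) ⊕ Fin n ⊕ Fin n

/-- Generators of the module `M_t` (for `|t| ≥ 1/2`): identity,
rotations `z_j D_{z_i} - z_i D_{z_j}`, `2t D_{z_j} - z_j`, and `D_{z_j}`. -/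
def Mgen {n : ℕ} (t : ℝ) : MIdx n → (Eucl n → ℂ) → (Eucl n → ℂ)
  | Sum.inl _ => id
  | Sum.inr (Sum.inl (i, j)) => fun u z => (z j : ℂ) * Dop i u z - (z i : ℂ) * Dop j u z
  | Sum.inr (Sum.inr (Sum.inl j)) => fun u z => 2 * (t : ℂ) * Dop j u z - (z j : ℂ) * u z
  | Sum.inr (Sum.inr (Sum.inr j)) => fun u => Dop j u

/-- Generators of the module `M_{t,0}` (for `|t| ≥ 1/2`): identity,
rotations `z_j D_{z_i} - z_i D_{z_j}`, `2t D_{z_j}`, and `D_{z_j} + z_j/(2t)`. -/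
def M0gen {n : ℕ} (t : ℝ) : MIdx n → (Eucl n → ℂ) → (Eucl n → ℂ)
  | Sum.inl _ => id
  | Sum.inr (Sum.inl (i, j)) => fun u z => (z j : ℂ) * Dop i u z - (z i : ℂ) * Dop j u z
  | Sum.inr (Sum.inr (Sum.inl j)) => fun u z => 2 * (t : ℂ) * Dop j u z
  | Sum.inr (Sum.inr (Sum.inr j)) => fun u z => Dop j u z + ((z j : ℂ) / (2 * (t : ℂ))) * u z

/-- For `|t| < 1/2` the modules are defined with `t` replaced by `t+1`. -/
def tEff (t : ℝ) : ℝ := if 1/2 ≤ |t| then t else t + 1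

/-- Apply an ordered tuple of generators `A₁ ⋯ A_k` to `u`. -/
def applyTuple {X ι : Type*} (gen : ι → (X → ℂ) → (X → ℂ)) {k : ℕ}
    (A : Fin k → ι) (u : X → ℂ) : X → ℂ :=
  (List.ofFn fun i => gen (A i)).foldr (fun f v => f v) u

/-- The module regularity norm `‖u‖_{W^k}` with respect to a generating family `gen`:
square root of the sum of `‖A₁⋯A_k u‖²_{L²}` over all ordered `k`-tuples. -/
def Wnorm {n : ℕ} {ι : Type*} [Fintype ι] (gen : ι → (Eucl n → ℂ) → (Eucl n → ℂ))
    (k : ℕ) (u : Eucl n → ℂ) : ℝ :=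
  Real.sqrt (∑ A : Fin k → ι, ((eLpNorm (applyTuple gen A u) 2 volume).toReal) ^ 2)

open scoped ContDiff

/-!
Write `φ(z) = e^{-i|z|²/(4t)}`. Since `D_{z_j} φ = -(z_j / 2t) φ`, the Leibniz rule gives
`D_{z_j}(φ u) = φ (D_{z_j} - z_j/(2t)) u`, so multiplication by `φ` carries each generator of
`M_t` to the corresponding generator of `M_{t,0}`: `M0gen t ι (φ u) = φ (Mgen t ι u)`.
By induction this intertwining passes to every product `A₁ ⋯ A_k`, and as `|φ| = 1` it
preserves all `L²` norms.
-/

def chirp {n : ℕ} (t : ℝ) (z : Eucl n) : ℂ :=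
  exp (-I * ((‖z‖ ^ 2 / (4 * t) : ℝ) : ℂ))

lemma norm_chirp {n : ℕ} (t : ℝ) (z : Eucl n) : ‖chirp t z‖ = 1 := by
  rw [chirp, mul_comm, mul_neg, ← neg_mul, ← ofReal_neg, norm_exp_ofReal_mul_I]

lemma hasFDerivAt_chirp {n : ℕ} (t : ℝ) (z : Eucl n) :
    HasFDerivAt (chirp t)
      (chirp t z • ((-I) • ofRealCLM.comp ((4 * t)⁻¹ • 2 • innerSL ℝ z))) z := by
  have hsq : HasFDerivAt (fun w : Eucl n => ‖w‖ ^ 2 / (4 * t))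
      ((4 * t)⁻¹ • 2 • innerSL ℝ z) z := by
    simpa [div_eq_inv_mul] using ((hasFDerivAt_id z).norm_sq).const_mul (4 * t)⁻¹
  exact ((ofRealCLM.hasFDerivAt.comp z hsq).const_mul (-I)).cexp

lemma contDiff_chirp {n : ℕ} (t : ℝ) : ContDiff ℝ ∞ (chirp (n := n) t) :=
  contDiff_exp.comp (contDiff_const.mul
    (ofRealCLM.contDiff.comp ((contDiff_norm_sq ℝ).div_const _)))

lemma pd_chirp {n : ℕ} (t : ℝ) (j : Fin n) (z : Eucl n) :
    pd j (chirp t) z = -I * ((z j : ℂ) / (2 * t)) * chirp t z := by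
  rw [pd, (hasFDerivAt_chirp t z).fderiv]
  simp [EuclideanSpace.inner_single_right]
  ring

lemma pd_mul {n : ℕ} (j : Fin n) {u v : Eucl n → ℂ} {z : Eucl n}
    (hu : DifferentiableAt ℝ u z) (hv : DifferentiableAt ℝ v z) :
    pd j (fun w => u w * v w) z = pd j u z * v z + u z * pd j v z := by
  rw [pd, fderiv_fun_mul hu hv]
  simp only [add_apply, smul_apply, smul_eq_mul, pd]
  ring

lemma Dop_chirp_mul {n : ℕ} (t : ℝ) (j : Fin n) {u : Eucl n → ℂ} {z : Eucl n}
    (hu : DifferentiableAt ℝ u z) :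
    Dop j (fun w => chirp t w * u w) z =
      chirp t z * (Dop j u z - (z j : ℂ) / (2 * t) * u z) := by
  rw [Dop, Dop, pd_mul j ((contDiff_chirp t).differentiable (by simp) z) hu, pd_chirp]
  linear_combination (z j / (2 * t) * chirp t z * u z) * I_sq

lemma contDiff_Dop {n : ℕ} (j : Fin n) {u : Eucl n → ℂ} (hu : ContDiff ℝ ∞ u) :
    ContDiff ℝ ∞ (Dop j u) :=
  contDiff_const.mul ((hu.fderiv_right le_rfl).clm_apply contDiff_const)

lemma contDiff_coord {n : ℕ} (j : Fin n) : ContDiff ℝ ∞ (fun z : Eucl n => (z j : ℂ)) :=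
  ofRealCLM.contDiff.comp (EuclideanSpace.proj (𝕜 := ℝ) j).contDiff

lemma contDiff_Mgen {n : ℕ} (t : ℝ) (ι : MIdx n) {u : Eucl n → ℂ} (hu : ContDiff ℝ ∞ u) :
    ContDiff ℝ ∞ (Mgen t ι u) := by
  rcases ι with _ | ⟨⟨i, j⟩ | j | j⟩
  · exact hu
  · exact ((contDiff_coord j).mul (contDiff_Dop i hu)).sub
      ((contDiff_coord i).mul (contDiff_Dop j hu))
  · exact (contDiff_const.mul (contDiff_Dop j hu)).sub ((contDiff_coord j).mul hu)
  · exact contDiff_Dop j hu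

lemma M0gen_chirp_mul {n : ℕ} {t : ℝ} (ht : t ≠ 0) (ι : MIdx n) {u : Eucl n → ℂ}
    (hu : Differentiable ℝ u) :
    M0gen t ι (fun z => chirp t z * u z) = fun z => chirp t z * Mgen t ι u z := by
  have ht' : (t : ℂ) ≠ 0 := ofReal_ne_zero.mpr ht
  funext z
  rcases ι with _ | ⟨⟨i, j⟩ | j | j⟩
  · rfl
  · simp only [M0gen, Mgen, Dop_chirp_mul t _ (hu z)]
    ring
  · simp only [M0gen, Mgen, Dop_chirp_mul t j (hu z)]
    field_simp
  · simp only [M0gen, Mgen, Dop_chirp_mul t j (hu z)]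
    ring

lemma applyTuple_succ {X ι : Type*} (gen : ι → (X → ℂ) → (X → ℂ)) {k : ℕ}
    (A : Fin (k + 1) → ι) (u : X → ℂ) :
    applyTuple gen A u = gen (A 0) (applyTuple gen (Fin.tail A) u) := by
  simp [applyTuple, List.ofFn_succ, Fin.tail]

lemma applyTuple_induction {X ι : Type*} {gen : ι → (X → ℂ) → (X → ℂ)} {P : (X → ℂ) → Prop}
    (hP : ∀ a u, P u → P (gen a u)) {k : ℕ} (A : Fin k → ι) {u : X → ℂ} (hu : P u) :
    P (applyTuple gen A u) := by
  induction k with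
  | zero => exact hu
  | succ k ih => rw [applyTuple_succ]; exact hP _ _ (ih _)

lemma applyTuple_intertwine {X ι : Type*} {gen gen' : ι → (X → ℂ) → (X → ℂ)}
    {T : (X → ℂ) → (X → ℂ)} {P : (X → ℂ) → Prop} (hP : ∀ a u, P u → P (gen a u))
    (hT : ∀ a u, P u → gen' a (T u) = T (gen a u)) {k : ℕ} (A : Fin k → ι) {u : X → ℂ}
    (hu : P u) : applyTuple gen' A (T u) = T (applyTuple gen A u) := by
  induction k with
  | zero => rfl
  | succ k ih =>
    rw [applyTuple_succ, applyTuple_succ, ih, hT _ _ (applyTuple_induction hP _ hu)]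

lemma eLpNorm_chirp_mul {n : ℕ} (t : ℝ) (p : ENNReal) (μ : Measure (Eucl n)) (w : Eucl n → ℂ) :
    eLpNorm (fun z => chirp t z * w z) p μ = eLpNorm w p μ :=
  eLpNorm_congr_norm_ae (ae_of_all _ fun z => by rw [norm_mul, norm_chirp, one_mul])

theorem stmt0_general (n k : ℕ) (t : ℝ) (ht : 1/2 ≤ |t|)
    (u : SchwartzMap (Eucl n) ℂ) :
    Wnorm (Mgen t) k ⇑u =
      Wnorm (M0gen t) k
        (fun z => Complex.exp (-Complex.I * ((‖z‖ ^ 2 / (4 * t) : ℝ) : ℂ)) * u z) := by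
  have ht0 : t ≠ 0 := by
    rintro rfl
    norm_num at ht
  have hconj (A : Fin k → MIdx n) :
      applyTuple (M0gen t) A (fun z => chirp t z * u z) =
        fun z => chirp t z * applyTuple (Mgen t) A u z :=
    applyTuple_intertwine (T := fun v z => chirp t z * v z) (fun a _ hv => contDiff_Mgen t a hv)
      (fun a _ hv => M0gen_chirp_mul ht0 a (hv.differentiable (by simp))) A u.smooth'
  change _ = Wnorm _ _ (fun z => chirp t z * u z)
  simp only [Wnorm, hconj, eLpNorm_chirp_mul]

/-- For `|t| ≥ 1/2` and `ũ(z) = e^{-i|z|²/(4t)} u(z)` one has the exact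
equality `‖u‖_{W^k_{M_t}} = ‖ũ‖_{W^k_{M_{t,0}}}`. -/
theorem stmt0 (n k : ℕ) (hn : 1 ≤ n) (t : ℝ) (ht : 1/2 ≤ |t|)
    (u : SchwartzMap (Eucl n) ℂ) :
    Wnorm (Mgen t) k ⇑u =
      Wnorm (M0gen t) k
        (fun z => Complex.exp (-Complex.I * ((‖z‖ ^ 2 / (4 * t) : ℝ) : ℂ)) * u z) :=
  stmt0_general n k t ht u
end
end

section
/- Let n = 3. There is a constant C, independent of t and W, such that for every t ∈ ℝ with |t| ≥ 1 and every Schwartz function W on ℝ³: ‖W‖_{L^{3/2}(ℝ³)} ≤ C |t|^{2/3} ‖W‖_{W¹_{M_{t,0}}}. -/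
open MeasureTheory Complex Filter

noncomputable section

/-!
Put `⟨z⟩ₜ = 1 + ‖z‖ / |t|` and write `W = ⟨·⟩ₜ⁻¹ • (⟨·⟩ₜ • W)`. Since `2/3 = 1/6 + 1/2`,
Hölder gives `‖W‖_{3/2} ≤ ‖⟨·⟩ₜ⁻¹‖₆ ‖⟨·⟩ₜ W‖₂`. By scaling,
`‖⟨·⟩ₜ⁻¹‖₆ = |t|^{1/2} ‖(1 + ‖·‖)⁻¹‖₆`, which is finite because `6 > 3`. On the other side
`z_j W / t = 2 (D_j + z_j/(2t)) W - t⁻¹ (2t D_j) W` is a combination of generators of `M_{t,0}`,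
so `‖⟨·⟩ₜ W‖₂ ≤ 10 ‖W‖_{W¹}`. Finally `|t|^{1/2} ≤ |t|^{2/3}` for `|t| ≥ 1`.
-/

open scoped ENNReal SchwartzMap LineDeriv

theorem EuclideanSpace.norm_le_sum_abs {ι : Type*} [Fintype ι] (x : EuclideanSpace ℝ ι) :
    ‖x‖ ≤ ∑ i, |x i| := by
  rw [EuclideanSpace.norm_eq, Real.sqrt_le_left (Finset.sum_nonneg fun i _ => abs_nonneg _)]
  simpa using Finset.sum_sq_le_sq_sum_of_nonneg (s := Finset.univ) fun i _ => abs_nonneg (x i)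

section Weight

variable {E F : Type*} [NormedAddCommGroup E] [NormedSpace ℝ E] [FiniteDimensional ℝ E]
  [MeasurableSpace E] [BorelSpace E] (μ : Measure E) [μ.IsAddHaarMeasure] [NormedAddCommGroup F]

theorem eLpNorm_comp_smul (g : E → F) {r : ℝ} (hr : r ≠ 0) {p : ℝ≥0∞} (hp : p ≠ ∞) :
    eLpNorm (fun x => g (r • x)) p μ =
      ENNReal.ofReal |(r ^ Module.finrank ℝ E)⁻¹| ^ (1 / p).toReal * eLpNorm g p μ := by
  rw [← smul_eq_mul, ← eLpNorm_smul_measure_of_ne_top hp, ← Measure.map_addHaar_smul μ hr]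
  exact ((Homeomorph.smulOfNeZero r hr).measurableEmbedding.eLpNorm_map_measure).symm

theorem eLpNorm_one_add_norm_inv_lt_top {p : ℝ≥0∞} (hp : p ≠ ∞)
    (hdim : (Module.finrank ℝ E : ℝ) < p.toReal) :
    eLpNorm (fun x : E => (1 + ‖x‖)⁻¹) p μ < ∞ := by
  have hp0 : 0 < p.toReal := lt_of_le_of_lt (Nat.cast_nonneg _) hdim
  rw [eLpNorm_lt_top_iff_lintegral_rpow_enorm_lt_top (ENNReal.toReal_pos_iff.1 hp0).1.ne' hp]
  convert finite_integral_one_add_norm (μ := μ) hdim using 3 with x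
  have hx : 0 < 1 + ‖x‖ := by positivity
  rw [Real.enorm_eq_ofReal (inv_pos.2 hx).le,
    ENNReal.ofReal_rpow_of_nonneg (inv_pos.2 hx).le hp0.le, Real.inv_rpow hx.le,
    Real.rpow_neg hx.le]

end Weight

instance holderTriple_six_two_three_halves : ENNReal.HolderTriple 6 2 (ENNReal.ofReal (3 / 2)) := by
  constructor
  rw [ENNReal.ofReal_div_of_pos (by norm_num), ENNReal.inv_div (by simp) (by simp),
    ← ENNReal.toReal_eq_toReal_iff' (by finiteness) (by finiteness),
    ENNReal.toReal_add (by finiteness) (by finiteness)]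
  norm_num

theorem applyTuple_fin_one {X ι : Type*} (gen : ι → (X → ℂ) → (X → ℂ)) (A : Fin 1 → ι)
    (u : X → ℂ) : applyTuple gen A u = gen (A 0) u := by
  simp [applyTuple]

theorem eLpNorm_le_ofReal_Wnorm_one {n : ℕ} {ι : Type*} [Fintype ι]
    {gen : ι → (Eucl n → ℂ) → (Eucl n → ℂ)} {u : Eucl n → ℂ} (i : ι)
    (hi : eLpNorm (gen i u) 2 volume ≠ ∞) :
    eLpNorm (gen i u) 2 volume ≤ ENNReal.ofReal (Wnorm gen 1 u) := by
  rw [Wnorm, ENNReal.le_ofReal_iff_toReal_le hi (Real.sqrt_nonneg _),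
    Real.le_sqrt ENNReal.toReal_nonneg (Finset.sum_nonneg fun _ _ => sq_nonneg _)]
  simpa [applyTuple_fin_one] using Finset.single_le_sum
    (f := fun A : Fin 1 → ι => (eLpNorm (applyTuple gen A u) 2 volume).toReal ^ 2)
    (fun A _ => sq_nonneg _) (Finset.mem_univ fun _ => i)

section

variable {n : ℕ}

theorem Dop_eq_lineDerivOp (j : Fin n) (W : 𝓢(Eucl n, ℂ)) :
    Dop j ⇑W = ⇑((-I) • ∂_{EuclideanSpace.single j (1 : ℝ)} W) := by
  ext z
  simp [Dop, pd, SchwartzMap.lineDerivOp_apply_eq_fderiv]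

theorem hasTemperateGrowth_coord (j : Fin n) : (fun z : Eucl n => (z j : ℂ)).HasTemperateGrowth :=
  (Complex.ofRealCLM.comp (EuclideanSpace.proj j : Eucl n →L[ℝ] ℝ)).hasTemperateGrowth

theorem exists_schwartzMap_M0gen (t : ℝ) (i : MIdx n) (W : 𝓢(Eucl n, ℂ)) :
    ∃ g : 𝓢(Eucl n, ℂ), M0gen t i ⇑W = ⇑g := by
  let D (j : Fin n) : 𝓢(Eucl n, ℂ) := (-I) • ∂_{EuclideanSpace.single j (1 : ℝ)} W
  let X (j : Fin n) : 𝓢(Eucl n, ℂ) →L[ℂ] 𝓢(Eucl n, ℂ) :=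
    SchwartzMap.smulLeftCLM ℂ fun z : Eucl n => (z j : ℂ)
  have hX (j : Fin n) (f : 𝓢(Eucl n, ℂ)) (z : Eucl n) : X j f z = (z j : ℂ) * f z :=
    SchwartzMap.smulLeftCLM_apply_apply (hasTemperateGrowth_coord j) f z
  rcases i with _ | ⟨i, j⟩ | j | j
  · exact ⟨W, rfl⟩
  · refine ⟨X j (D i) - X i (D j), funext fun z => ?_⟩
    simp only [M0gen, Dop_eq_lineDerivOp, sub_apply, hX, D]
  · refine ⟨(2 * t : ℂ) • D j, funext fun z => ?_⟩
    simp [M0gen, Dop_eq_lineDerivOp, D, mul_assoc]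
  · refine ⟨D j + (2 * t : ℂ)⁻¹ • X j W, funext fun z => ?_⟩
    simp only [M0gen, Dop_eq_lineDerivOp, add_apply, smul_apply, hX, D]
    rw [div_eq_inv_mul, mul_assoc]
    rfl

theorem memLp_M0gen (t : ℝ) (i : MIdx n) (W : 𝓢(Eucl n, ℂ)) (p : ℝ≥0∞) :
    MemLp (M0gen t i ⇑W) p volume := by
  obtain ⟨g, hg⟩ := exists_schwartzMap_M0gen t i W
  exact hg ▸ g.memLp p

theorem inv_smul_coord_mul_eq_M0gen {t : ℝ} (ht : t ≠ 0) (j : Fin n) (u : Eucl n → ℂ) :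
    (fun z => (((t⁻¹ • z) j : ℝ) : ℂ) * u z) =
      (2 : ℂ) • M0gen t (.inr (.inr (.inr j))) u -
        (t : ℂ)⁻¹ • M0gen t (.inr (.inr (.inl j))) u := by
  have ht' : (t : ℂ) ≠ 0 := by exact_mod_cast ht
  funext z
  simp only [M0gen, Pi.sub_apply, Pi.smul_apply, PiLp.smul_apply, smul_eq_mul]
  push_cast
  field_simp
  ring

theorem eLpNorm_inv_smul_coord_mul_le {t : ℝ} (ht : 1 ≤ |t|) (j : Fin n)
    (W : 𝓢(Eucl n, ℂ)) :
    eLpNorm (fun z => (((t⁻¹ • z) j : ℝ) : ℂ) * W z) 2 volume ≤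
      3 * ENNReal.ofReal (Wnorm (M0gen t) 1 ⇑W) := by
  have ht0 : t ≠ 0 := by rintro rfl; norm_num at ht
  have hbound (i : MIdx n) := eLpNorm_le_ofReal_Wnorm_one i (memLp_M0gen t i W 2).eLpNorm_ne_top
  have ht_inv : ‖(t : ℂ)⁻¹‖ₑ ≤ 1 := by
    rw [enorm_inv (by exact_mod_cast ht0), ENNReal.inv_le_one, ← ofReal_norm]
    simpa using ht
  rw [inv_smul_coord_mul_eq_M0gen ht0]
  calc _ ≤ eLpNorm ((2 : ℂ) • M0gen t (.inr (.inr (.inr j))) ⇑W) 2 volume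
        + eLpNorm ((t : ℂ)⁻¹ • M0gen t (.inr (.inr (.inl j))) ⇑W) 2 volume :=
        eLpNorm_sub_le ((memLp_M0gen t _ W 2).1.const_smul _)
          ((memLp_M0gen t _ W 2).1.const_smul _) one_le_two
    _ = 2 * eLpNorm (M0gen t (.inr (.inr (.inr j))) ⇑W) 2 volume
        + ‖(t : ℂ)⁻¹‖ₑ * eLpNorm (M0gen t (.inr (.inr (.inl j))) ⇑W) 2 volume := by
        rw [eLpNorm_const_smul, eLpNorm_const_smul, ← ofReal_norm (2 : ℂ)]
        norm_num
    _ ≤ 2 * ENNReal.ofReal (Wnorm (M0gen t) 1 ⇑W) + 1 * ENNReal.ofReal (Wnorm (M0gen t) 1 ⇑W) := by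
        gcongr <;> apply hbound
    _ = 3 * ENNReal.ofReal (Wnorm (M0gen t) 1 ⇑W) := by ring

theorem eLpNorm_one_add_norm_inv_smul_smul_le {t : ℝ} (ht : 1 ≤ |t|)
    (W : 𝓢(Eucl n, ℂ)) :
    eLpNorm (fun z => (1 + ‖t⁻¹ • z‖) • W z) 2 volume ≤
      (1 + 3 * n) * ENNReal.ofReal (Wnorm (M0gen t) 1 ⇑W) := by
  set N := ENNReal.ofReal (Wnorm (M0gen t) 1 ⇑W)
  let h (j : Fin n) (z : Eucl n) : ℂ := (((t⁻¹ • z) j : ℝ) : ℂ) * W z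
  have hmeas (j : Fin n) : AEStronglyMeasurable (fun z => ‖h j z‖) volume := by
    have : Continuous (h j) := by
      simp only [h]
      fun_prop
    exact this.norm.aestronglyMeasurable
  have hpointwise (z : Eucl n) :
      ‖(1 + ‖t⁻¹ • z‖) • W z‖ ≤ ((fun z => ‖W z‖) + ∑ j, fun z => ‖h j z‖) z := by
    have hz := EuclideanSpace.norm_le_sum_abs (t⁻¹ • z)
    simp only [Pi.add_apply, Finset.sum_apply, h, norm_mul, norm_smul, Complex.norm_real,
      Real.norm_eq_abs, ← Finset.sum_mul] at hz ⊢
    rw [abs_of_nonneg (by positivity), ← one_add_mul]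
    gcongr
  calc _ ≤ eLpNorm ((fun z => ‖W z‖) + ∑ j, fun z => ‖h j z‖) 2 volume :=
        eLpNorm_mono_real hpointwise
    _ ≤ eLpNorm (⇑W) 2 volume + ∑ j, eLpNorm (h j) 2 volume := by
        refine (eLpNorm_add_le W.continuous.norm.aestronglyMeasurable
          (Finset.aestronglyMeasurable_sum _ fun j _ => hmeas j) one_le_two).trans ?_
        rw [eLpNorm_norm]
        refine add_le_add le_rfl ((eLpNorm_sum_le (fun j _ => hmeas j) one_le_two).trans_eq ?_)
        simp only [eLpNorm_norm]
    _ ≤ N + ∑ _j : Fin n, 3 * N := by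
        refine add_le_add ?_ (Finset.sum_le_sum fun j _ => eLpNorm_inv_smul_coord_mul_le ht j W)
        simpa [M0gen] using
          eLpNorm_le_ofReal_Wnorm_one (Sum.inl ()) (memLp_M0gen t _ W 2).eLpNorm_ne_top
    _ = (1 + 3 * n) * N := by
        simp only [Finset.sum_const, Finset.card_univ, Fintype.card_fin, nsmul_eq_mul]
        ring

theorem eLpNorm_three_halves_le {t : ℝ} (ht : 1 ≤ |t|) (W : 𝓢(Eucl n, ℂ)) :
    eLpNorm (⇑W) (ENNReal.ofReal (3 / 2)) volume ≤
      ENNReal.ofReal (|t| ^ ((n : ℝ) / 6)) * eLpNorm (fun x : Eucl n => (1 + ‖x‖)⁻¹) 6 volume *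
        ((1 + 3 * n) * ENNReal.ofReal (Wnorm (M0gen t) 1 ⇑W)) := by
  have ht0 : t ≠ 0 := by rintro rfl; norm_num at ht
  have hW : ⇑W = (fun z : Eucl n => (1 + ‖t⁻¹ • z‖)⁻¹) • fun z => (1 + ‖t⁻¹ • z‖) • W z := by
    funext z
    rw [Pi.smul_apply', smul_smul, inv_mul_cancel₀ (by positivity), one_smul]
  have hscale : eLpNorm (fun z : Eucl n => (1 + ‖t⁻¹ • z‖)⁻¹) 6 volume =
      ENNReal.ofReal (|t| ^ ((n : ℝ) / 6)) * eLpNorm (fun x : Eucl n => (1 + ‖x‖)⁻¹) 6 volume := by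
    rw [eLpNorm_comp_smul volume (fun x => (1 + ‖x‖)⁻¹) (inv_ne_zero ht0) (by simp),
      finrank_euclideanSpace_fin, inv_pow, inv_inv, abs_pow,
      ENNReal.ofReal_rpow_of_nonneg (by positivity) (by positivity), ← Real.rpow_natCast,
      ← Real.rpow_mul (abs_nonneg t)]
    norm_num [div_eq_mul_inv]
  calc eLpNorm (⇑W) (ENNReal.ofReal (3 / 2)) volume
      = eLpNorm ((fun z : Eucl n => (1 + ‖t⁻¹ • z‖)⁻¹) • fun z => (1 + ‖t⁻¹ • z‖) • W z)
          (ENNReal.ofReal (3 / 2)) volume := by rw [← hW]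
    _ ≤ eLpNorm (fun z : Eucl n => (1 + ‖t⁻¹ • z‖)⁻¹) 6 volume *
          eLpNorm (fun z => (1 + ‖t⁻¹ • z‖) • W z) 2 volume :=
        eLpNorm_smul_le_mul_eLpNorm (by fun_prop) (by fun_prop)
    _ ≤ _ := by
        rw [hscale]
        gcongr
        exact eLpNorm_one_add_norm_inv_smul_smul_le ht W

end

/-- in dimension 3 there is `C`, independent of `t` and `W`, such that
for `|t| ≥ 1`, `‖W‖_{L^{3/2}(ℝ³)} ≤ C |t|^{2/3} ‖W‖_{W¹_{M_{t,0}}}`. -/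
theorem stmt9 :
    ∃ C > 0, ∀ t : ℝ, 1 ≤ |t| → ∀ W : SchwartzMap (Eucl 3) ℂ,
      (eLpNorm (⇑W) (ENNReal.ofReal (3 / 2)) volume).toReal ≤
        C * |t| ^ ((2 : ℝ) / 3) * Wnorm (M0gen t) 1 ⇑W := by
  set K := eLpNorm (fun x : Eucl 3 => (1 + ‖x‖)⁻¹) 6 volume
  have hK : K ≠ ∞ := (eLpNorm_one_add_norm_inv_lt_top volume (by simp) (by norm_num)).ne
  refine ⟨10 * K.toReal + 1, by positivity, fun t ht W => ?_⟩
  have hbound := ENNReal.toReal_mono (by finiteness) (eLpNorm_three_halves_le ht W)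
  set N := Wnorm (M0gen t) 1 ⇑W
  have hN : 0 ≤ N := Real.sqrt_nonneg _
  simp only [ENNReal.toReal_mul, ENNReal.toReal_ofReal hN,
    ENNReal.toReal_ofReal (Real.rpow_nonneg (abs_nonneg t) _)] at hbound
  calc _ ≤ |t| ^ ((3 : ℝ) / 6) * K.toReal * (10 * N) := by convert hbound using 3 <;> norm_num
    _ = 10 * K.toReal * |t| ^ ((3 : ℝ) / 6) * N := by ring
    _ ≤ 10 * K.toReal * |t| ^ ((2 : ℝ) / 3) * N := by
        gcongr 10 * K.toReal * ?_ * N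
        exact Real.rpow_le_rpow_of_exponent_le ht (by norm_num)
    _ ≤ (10 * K.toReal + 1) * |t| ^ ((2 : ℝ) / 3) * N := by gcongr ?_ * _ * _; linarith
end
end

section
/- Let u be a Schwartz-class solution of the defocusing nonlinear Schrödinger equation with potential V, where V : ℝ × ℝ^n → ℝ is continuous (real-valued). Then the mass is conserved: ∫_{ℝ^n} |u(t,z)|² dz = ∫_{ℝ^n} |u(0,z)|² dz for every t ∈ ℝ. -/
open MeasureTheory Complex Filter

noncomputable section

/-- The dimension/power condition: `p` odd, with `p ≥ 5` if `n = 1`, `p ≥ 3` if `n = 2`,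
`p = 3` if `n = 3`. -/
def DimCond (n p : ℕ) : Prop :=
  Odd p ∧ ((n = 1 ∧ 5 ≤ p) ∨ (n = 2 ∧ 3 ≤ p) ∨ (n = 3 ∧ p = 3))

/-- A Schwartz-class solution of the defocusing NLS `(D_t + Δ + V)u = -|u|^{p-1}u`:
`u` is smooth on spacetime, `u(t,·)` and `∂_t u(t,·)` are Schwartz for each `t`, all
Schwartz seminorms of `u(t,·)` and `∂_t u(t,·)` are bounded locally uniformly in `t`,
and `∂_t u = i(Σ_j ∂²_{z_j} u − V u − |u|^{p−1} u)` holds pointwise. -/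
structure IsNLSSolution (n p : ℕ) (V : ℝ → Eucl n → ℝ) (u : ℝ → Eucl n → ℂ) : Prop where
  smooth : ContDiff ℝ (⊤ : ℕ∞) fun q : ℝ × Eucl n => u q.1 q.2
  schwartz : ∀ t, ∃ w : SchwartzMap (Eucl n) ℂ, ⇑w = u t
  schwartz_deriv : ∀ t, ∃ w : SchwartzMap (Eucl n) ℂ,
      ⇑w = fun z => deriv (fun s => u s z) t
  locUnifBound : ∀ (m l : ℕ) (K : Set ℝ), IsCompact K → ∃ C : ℝ, ∀ t ∈ K, ∀ z : Eucl n,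
      ‖z‖ ^ m * ‖iteratedFDeriv ℝ l (u t) z‖ ≤ C ∧
      ‖z‖ ^ m * ‖iteratedFDeriv ℝ l (fun w => deriv (fun s => u s w) t) z‖ ≤ C
  eqn : ∀ t z, deriv (fun s => u s z) t =
      Complex.I * (∑ j, pd j (pd j (u t)) z - (V t z : ℂ) * u t z
        - (‖u t z‖ : ℂ) ^ (p - 1) * u t z)

/-- The energy `E(t) = (1/2)∫|∇_z u|² + (1/(p+1))∫|u|^{p+1}`. -/
def energy (n p : ℕ) (u : ℝ → Eucl n → ℂ) (t : ℝ) : ℝ :=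
  (1 / 2) * (∫ z : Eucl n, ∑ j, ‖pd j (u t) z‖ ^ 2) +
    (1 / ((p : ℝ) + 1)) * ∫ z : Eucl n, ‖u t z‖ ^ (p + 1)

namespace MassAux

open Metric

variable {n : ℕ}

lemma key_ineq (k : ℕ) {x b C₀ C₁ : ℝ} (hx : 0 ≤ x) (hb : 0 ≤ b) (h0 : b ≤ C₀)
    (h1 : x ^ k * b ≤ C₁) : b ≤ (2 ^ k * (C₀ + C₁)) * (1 + x) ^ (-(k : ℝ)) := by
  have hxk : (0:ℝ) ≤ x ^ k := pow_nonneg hx k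
  have hC0 : 0 ≤ C₀ := hb.trans h0
  have hC1 : 0 ≤ C₁ := le_trans (mul_nonneg hxk hb) h1
  have hpos : (0:ℝ) < (1 + x) ^ k := by positivity
  have h2k : (0:ℝ) < 2 ^ k := by positivity
  have h2 : (1 + x) ^ k ≤ 2 ^ k * (1 + x ^ k) := by
    rcases le_total x 1 with h | h
    · calc (1 + x) ^ k ≤ 2 ^ k := by
            apply pow_le_pow_left₀ (by linarith) (by linarith)
        _ ≤ 2 ^ k * (1 + x ^ k) := by nlinarith
    · calc (1 + x) ^ k ≤ (2 * x) ^ k := by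
            apply pow_le_pow_left₀ (by linarith) (by linarith)
        _ = 2 ^ k * x ^ k := mul_pow 2 x k
        _ ≤ 2 ^ k * (1 + x ^ k) := by nlinarith
  have h3 : (1 + x) ^ k * b ≤ 2 ^ k * (C₀ + C₁) := by
    calc (1 + x) ^ k * b ≤ (2 ^ k * (1 + x ^ k)) * b := mul_le_mul_of_nonneg_right h2 hb
      _ = 2 ^ k * (b + x ^ k * b) := by ring
      _ ≤ 2 ^ k * (C₀ + C₁) := by nlinarith
  rw [Real.rpow_neg (by linarith), Real.rpow_natCast, ← div_eq_mul_inv, le_div_iff₀ hpos]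
  nlinarith

lemma env_integrable (n : ℕ) :
    MeasureTheory.Integrable (fun z : Eucl n => (1 + ‖z‖) ^ (-((n+1:ℕ)):ℝ))
      MeasureTheory.volume := by
  apply integrable_one_add_norm
  rw [finrank_euclideanSpace_fin]
  exact_mod_cast lt_add_one n

lemma schwartz_decay {F : Type*} [NormedAddCommGroup F] [NormedSpace ℝ F]
    (w : SchwartzMap (Eucl n) F) (k : ℕ) :
    ∃ C : ℝ, 0 ≤ C ∧ ∀ x, ‖w x‖ ≤ C * (1 + ‖x‖) ^ (-(k : ℝ)) := by
  refine ⟨2 ^ k * (SchwartzMap.seminorm ℝ 0 0 w + SchwartzMap.seminorm ℝ k 0 w),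
    mul_nonneg (by positivity) (add_nonneg (apply_nonneg _ _) (apply_nonneg _ _)),
    fun x => ?_⟩
  exact key_ineq k (norm_nonneg x) (norm_nonneg _) (SchwartzMap.norm_le_seminorm ℝ w x)
    (SchwartzMap.norm_pow_mul_le_seminorm ℝ w k x)

lemma schwartz_integrable {F : Type*} [NormedAddCommGroup F] [NormedSpace ℝ F]
    (g : SchwartzMap (Eucl n) F) : MeasureTheory.Integrable ⇑g MeasureTheory.volume := by
  obtain ⟨C, hC0, hC⟩ := schwartz_decay g (n + 1)
  exact ((env_integrable n).const_mul C).mono' g.continuous.aestronglyMeasurable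
    (Filter.Eventually.of_forall fun z => hC z)

lemma schwartz_temperate {F : Type*} [NormedAddCommGroup F] [NormedSpace ℝ F]
    (g : SchwartzMap (Eucl n) F) : Function.HasTemperateGrowth ⇑g := by
  refine ⟨g.smooth ⊤, fun N => ⟨0, SchwartzMap.seminorm ℝ 0 N g, fun x => ?_⟩⟩
  simpa using SchwartzMap.norm_iteratedFDeriv_le_seminorm ℝ g N x

lemma integral_fderiv_schwartz_zero (w : SchwartzMap (Eucl n) ℂ) (v : Eucl n) :
    ∫ z : Eucl n, fderiv ℝ (⇑w) z v = 0 := by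

  set w1 : SchwartzMap (Eucl n) ℂ := LineDeriv.lineDerivOp v w with hw1def
  obtain ⟨C, hC0, hC⟩ := schwartz_decay w1 (n + 1)
  have hint : MeasureTheory.Integrable (fun z : Eucl n => w (z + (0:ℝ) • v))
      MeasureTheory.volume := by
    have h : (fun z : Eucl n => w (z + (0:ℝ) • v)) = ⇑w := by funext z; simp
    rw [h]; exact schwartz_integrable w
  have hbound : ∀ z : Eucl n, ∀ s ∈ Metric.ball (0:ℝ) 1,
      ‖w1 (z + s • v)‖ ≤ (C * (1 + ‖v‖) ^ (n+1)) * (1 + ‖z‖) ^ (-((n+1:ℕ)):ℝ) := by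
    intro z s hs
    have hs1 : |s| ≤ 1 := by
      have h := mem_ball_iff_norm.mp hs
      rw [sub_zero, Real.norm_eq_abs] at h
      linarith
    have h5 : ‖z‖ ≤ ‖z + s • v‖ + ‖v‖ := by
      have h6 : ‖z‖ = ‖(z + s • v) - s • v‖ := by rw [add_sub_cancel_right]
      have h7 : ‖(z + s • v) - s • v‖ ≤ ‖z + s • v‖ + ‖s • v‖ := norm_sub_le _ _
      have h8 : ‖s • v‖ ≤ ‖v‖ := by
        rw [norm_smul, Real.norm_eq_abs]
        nlinarith [norm_nonneg v, abs_nonneg s]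
      linarith
    have hY : (0:ℝ) < 1 + ‖z + s • v‖ := by linarith [norm_nonneg (z + s • v)]
    have hZ : (0:ℝ) < 1 + ‖z‖ := by linarith [norm_nonneg z]
    have hv0 : (0:ℝ) ≤ ‖v‖ := norm_nonneg v
    have h4 : (1 + ‖z‖) ≤ (1 + ‖v‖) * (1 + ‖z + s • v‖) := by nlinarith [norm_nonneg (z + s • v)]
    have hpow : (1 + ‖z‖) ^ (n+1) ≤ (1 + ‖v‖) ^ (n+1) * (1 + ‖z + s • v‖) ^ (n+1) := by
      rw [← mul_pow]
      exact pow_le_pow_left₀ hZ.le h4 _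
    have hstep : (1 + ‖z + s • v‖) ^ (-((n+1:ℕ)):ℝ)
        ≤ (1 + ‖v‖) ^ (n+1) * (1 + ‖z‖) ^ (-((n+1:ℕ)):ℝ) := by
      rw [Real.rpow_neg hY.le, Real.rpow_neg hZ.le, Real.rpow_natCast, Real.rpow_natCast]
      calc ((1 + ‖z + s • v‖) ^ (n+1))⁻¹
          = (1 + ‖v‖) ^ (n+1) * ((1 + ‖v‖) ^ (n+1) * (1 + ‖z + s • v‖) ^ (n+1))⁻¹ := by
            rw [mul_inv, ← mul_assoc, mul_inv_cancel₀ (by positivity), one_mul]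
        _ ≤ (1 + ‖v‖) ^ (n+1) * ((1 + ‖z‖) ^ (n+1))⁻¹ := by gcongr
    calc ‖w1 (z + s • v)‖ ≤ C * (1 + ‖z + s • v‖) ^ (-((n+1:ℕ)):ℝ) := by
          have := hC (z + s • v)
          simpa using this
      _ ≤ C * ((1 + ‖v‖) ^ (n+1) * (1 + ‖z‖) ^ (-((n+1:ℕ)):ℝ)) :=
          mul_le_mul_of_nonneg_left hstep hC0
      _ = (C * (1 + ‖v‖) ^ (n+1)) * (1 + ‖z‖) ^ (-((n+1:ℕ)):ℝ) := by ring
  have hdiff : ∀ z : Eucl n, ∀ s ∈ Metric.ball (0:ℝ) 1,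
      HasDerivAt (fun s : ℝ => w (z + s • v)) (w1 (z + s • v)) s := by
    intro z s _
    have h1 : HasDerivAt (fun s : ℝ => z + s • v) v s := by
      simpa using ((hasDerivAt_id s).smul_const v).const_add z
    have h2 : HasFDerivAt (⇑w) (fderiv ℝ (⇑w) (z + s • v)) (z + s • v) :=
      w.differentiableAt.hasFDerivAt
    have h3 := h2.comp_hasDerivAt s h1
    have h4 : w1 (z + s • v) = fderiv ℝ (⇑w) (z + s • v) v := by
      rw [hw1def]; exact SchwartzMap.lineDerivOp_apply_eq_fderiv v w (z + s • v)
    rw [h4]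
    exact h3
  have hmain := hasDerivAt_integral_of_dominated_loc_of_deriv_le
      (μ := MeasureTheory.volume)
      (F := fun (s : ℝ) (z : Eucl n) => w (z + s • v))
      (F' := fun (s : ℝ) (z : Eucl n) => w1 (z + s • v))
      (x₀ := (0:ℝ))
      (bound := fun z : Eucl n => (C * (1 + ‖v‖) ^ (n+1)) * (1 + ‖z‖) ^ (-((n+1:ℕ)):ℝ))
      (Metric.ball_mem_nhds _ one_pos)
      (Filter.Eventually.of_forall fun s =>
        ((w.continuous.comp (continuous_id.add continuous_const)).aestronglyMeasurable))
      hint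
      ((w1.continuous.comp (continuous_id.add continuous_const)).aestronglyMeasurable)
      (Filter.Eventually.of_forall hbound)
      ((env_integrable n).const_mul _)
      (Filter.Eventually.of_forall hdiff)
  have hconst : (fun s : ℝ => ∫ z : Eucl n, w (z + s • v)) = fun _ => ∫ z : Eucl n, w z := by
    funext s
    exact MeasureTheory.integral_add_right_eq_self (⇑w) (s • v)
  have h0 : HasDerivAt (fun _ : ℝ => ∫ z : Eucl n, w z)
      (∫ z : Eucl n, w1 (z + (0:ℝ) • v)) 0 := by
    rw [← hconst]; exact hmain.2
  have hz := (hasDerivAt_const (0:ℝ) (∫ z : Eucl n, w z)).unique h0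
  have hfun : (fun z : Eucl n => w1 (z + (0:ℝ) • v)) = fun z : Eucl n => fderiv ℝ (⇑w) z v := by
    funext z
    rw [zero_smul, add_zero, hw1def]
    exact SchwartzMap.lineDerivOp_apply_eq_fderiv v w z
  rw [hfun] at hz
  exact hz.symm

end MassAux

namespace MassAux

/-- The pointwise time-derivative of `‖u s z‖²`. -/
def Fd {n : ℕ} (u : ℝ → Eucl n → ℂ) (s : ℝ) (z : Eucl n) : ℝ :=
  2 * ((u s z).re * (deriv (fun r => u r z) s).re +
       (u s z).im * (deriv (fun r => u r z) s).im)

lemma re_I_mul_conj_self (c : ℂ) : (Complex.I * ((starRingEnd ℂ) c * c)).re = 0 := by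
  simp [Complex.mul_re, Complex.mul_im]
  ring

lemma re_conj_mul_I_real (a : ℂ) (r : ℝ) :
    ((starRingEnd ℂ) a * (Complex.I * ((r:ℂ) * a))).re = 0 := by
  simp [Complex.mul_re, Complex.mul_im]
  ring

end MassAux

/-- mass conservation for Schwartz-class solutions of defocusing NLS
with continuous real potential: `∫|u(t,z)|² dz = ∫|u(0,z)|² dz` for all `t`. -/
theorem stmt10 (n p : ℕ) (hnp : DimCond n p)
    (V : ℝ → Eucl n → ℝ) (hV : Continuous fun q : ℝ × Eucl n => V q.1 q.2)
    (u : ℝ → Eucl n → ℂ) (hu : IsNLSSolution n p V u) :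
    ∀ t : ℝ, ∫ z : Eucl n, ‖u t z‖ ^ 2 = ∫ z : Eucl n, ‖u 0 z‖ ^ 2 := by
  classical
  open MassAux in
  have hcontu : ∀ s : ℝ, Continuous (u s) := fun s =>
    (hu.smooth.continuous).comp (continuous_const.prodMk continuous_id)
  -- pointwise time derivative of ‖u s z‖²
  have hderiv_pt : ∀ (s : ℝ) (z : Eucl n),
      HasDerivAt (fun r : ℝ => ‖u r z‖ ^ 2) (MassAux.Fd u s z) s := by
    intro s z
    have hdq : DifferentiableAt ℝ (fun q : ℝ × Eucl n => u q.1 q.2) (s, z) :=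
      (hu.smooth.differentiable (by simp)).differentiableAt
    have hds : DifferentiableAt ℝ (fun r : ℝ => u r z) s := by
      have heq : (fun r : ℝ => u r z)
          = (fun q : ℝ × Eucl n => u q.1 q.2) ∘ fun r : ℝ => (r, z) := rfl
      rw [heq]
      exact hdq.comp s (DifferentiableAt.prodMk differentiableAt_id (differentiableAt_const z))
    have hc : HasDerivAt (fun r : ℝ => u r z) (deriv (fun r => u r z) s) s := hds.hasDerivAt
    have hre : HasDerivAt (fun r : ℝ => (u r z).re) ((deriv (fun r => u r z) s).re) s := by
      exact (Complex.reCLM.hasFDerivAt.comp_hasDerivAt s hc)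
    have him : HasDerivAt (fun r : ℝ => (u r z).im) ((deriv (fun r => u r z) s).im) s := by
      exact (Complex.imCLM.hasFDerivAt.comp_hasDerivAt s hc)
    have hmain := (hre.mul hre).add (him.mul him)
    have heq : (fun r : ℝ => ‖u r z‖ ^ 2)
        = fun r => (u r z).re * (u r z).re + (u r z).im * (u r z).im := by
      funext r
      rw [← Complex.normSq_apply, ← Complex.sq_norm]
    rw [heq]
    refine hmain.congr_deriv ?_
    simp only [MassAux.Fd]
    ring
  -- the mass has derivative 0 at every time
  have hM : ∀ t : ℝ, HasDerivAt (fun s : ℝ => ∫ z : Eucl n, ‖u s z‖ ^ 2) 0 t := by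
    intro t
    obtain ⟨w, hw⟩ := hu.schwartz t
    obtain ⟨w', hw'⟩ := hu.schwartz_deriv t
    obtain ⟨C₀, h₀⟩ := hu.locUnifBound 0 0 (Metric.closedBall t 1) (isCompact_closedBall t 1)
    obtain ⟨C₁, h₁⟩ := hu.locUnifBound (n+1) 0 (Metric.closedBall t 1) (isCompact_closedBall t 1)
    have htK : t ∈ Metric.closedBall t 1 := Metric.mem_closedBall_self zero_le_one
    have hC₀ : 0 ≤ C₀ := by
      have h := (h₀ t htK 0).1
      simp only [pow_zero, one_mul, norm_iteratedFDeriv_zero] at h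
      exact (norm_nonneg _).trans h
    have hC₁ : 0 ≤ C₁ := by
      have h := (h₁ t htK 0).1
      exact le_trans (by positivity) h
    -- uniform bounds
    have hub : ∀ s ∈ Metric.ball t 1, ∀ z : Eucl n, ‖u s z‖ ≤ C₀ ∧
        ‖deriv (fun r => u r z) s‖
          ≤ (2^(n+1) * (C₀ + C₁)) * (1 + ‖z‖) ^ (-((n+1:ℕ)):ℝ) := by
      intro s hs z
      have hsK : s ∈ Metric.closedBall t 1 := Metric.ball_subset_closedBall hs
      have e0 := h₀ s hsK z
      have e1 := h₁ s hsK z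
      simp only [pow_zero, one_mul, norm_iteratedFDeriv_zero] at e0 e1
      exact ⟨e0.1, MassAux.key_ineq (n+1) (norm_nonneg z) (norm_nonneg _) e0.2 e1.2⟩
    -- bound on Fd
    have hbound : ∀ z : Eucl n, ∀ s ∈ Metric.ball t 1,
        ‖MassAux.Fd u s z‖
          ≤ (4 * C₀ * (2^(n+1) * (C₀ + C₁))) * (1 + ‖z‖) ^ (-((n+1:ℕ)):ℝ) := by
      intro z s hs
      obtain ⟨ha, hb⟩ := hub s hs z
      set a := u s z
      set b := deriv (fun r => u r z) s
      have h1 : |a.re * b.re| ≤ ‖a‖ * ‖b‖ := by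
        rw [abs_mul]
        exact mul_le_mul (Complex.abs_re_le_norm a) (Complex.abs_re_le_norm b)
          (abs_nonneg _) (norm_nonneg _)
      have h2 : |a.im * b.im| ≤ ‖a‖ * ‖b‖ := by
        rw [abs_mul]
        exact mul_le_mul (Complex.abs_im_le_norm a) (Complex.abs_im_le_norm b)
          (abs_nonneg _) (norm_nonneg _)
      have h3 : ‖MassAux.Fd u s z‖ ≤ 4 * (‖a‖ * ‖b‖) := by
        have : MassAux.Fd u s z = 2 * (a.re * b.re + a.im * b.im) := rfl
        rw [this, Real.norm_eq_abs, abs_mul, show |(2:ℝ)| = 2 by norm_num]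
        have h4 : |a.re * b.re + a.im * b.im| ≤ 2 * (‖a‖ * ‖b‖) := by
          calc |a.re * b.re + a.im * b.im| ≤ |a.re * b.re| + |a.im * b.im| := abs_add_le _ _
            _ ≤ 2 * (‖a‖ * ‖b‖) := by linarith
        linarith [mul_le_mul_of_nonneg_left h4 (by norm_num : (0:ℝ) ≤ 2)]
      have h5 : ‖a‖ * ‖b‖
          ≤ C₀ * ((2^(n+1) * (C₀ + C₁)) * (1 + ‖z‖) ^ (-((n+1:ℕ)):ℝ)) :=
        mul_le_mul ha hb (norm_nonneg _) hC₀
      calc ‖MassAux.Fd u s z‖ ≤ 4 * (‖a‖ * ‖b‖) := h3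
        _ ≤ 4 * (C₀ * ((2^(n+1) * (C₀ + C₁)) * (1 + ‖z‖) ^ (-((n+1:ℕ)):ℝ))) := by linarith
        _ = (4 * C₀ * (2^(n+1) * (C₀ + C₁))) * (1 + ‖z‖) ^ (-((n+1:ℕ)):ℝ) := by ring
    -- integrability of ‖u t ·‖²
    have hFt_int : Integrable (fun z : Eucl n => ‖u t z‖ ^ 2) volume := by
      rw [← hw]
      have h : (fun z : Eucl n => ‖w z‖ ^ 2) = fun z => ‖w z‖ * ‖w z‖ := by
        funext z; ring
      rw [h]
      exact ((MassAux.schwartz_integrable w).norm).bdd_mul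
        (w.continuous.norm.aestronglyMeasurable)
        (Filter.Eventually.of_forall fun z => by
          rw [norm_norm]; exact SchwartzMap.norm_le_seminorm ℝ w z)
    -- measurability of Fd t
    have hFdt : MassAux.Fd u t = fun z : Eucl n =>
        2 * ((w z).re * (w' z).re + (w z).im * (w' z).im) := by
      funext z
      simp only [MassAux.Fd]
      rw [← congrFun hw z, ← congrFun hw' z]
    have hFdt_meas : AEStronglyMeasurable (MassAux.Fd u t) (volume : Measure (Eucl n)) := by
      rw [hFdt]
      exact (continuous_const.mul
        (((Complex.continuous_re.comp w.continuous).mul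
            (Complex.continuous_re.comp w'.continuous)).add
          ((Complex.continuous_im.comp w.continuous).mul
            (Complex.continuous_im.comp w'.continuous)))).aestronglyMeasurable
    have hmain := hasDerivAt_integral_of_dominated_loc_of_deriv_le
        (μ := (volume : Measure (Eucl n)))
        (F := fun (s : ℝ) (z : Eucl n) => ‖u s z‖ ^ 2)
        (F' := MassAux.Fd u) (x₀ := t)
        (bound := fun z : Eucl n =>
          (4 * C₀ * (2^(n+1) * (C₀ + C₁))) * (1 + ‖z‖) ^ (-((n+1:ℕ)):ℝ))
        (Metric.ball_mem_nhds _ one_pos)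
        (Filter.Eventually.of_forall fun s =>
          (((hcontu s).norm.pow 2).aestronglyMeasurable))
        hFt_int
        hFdt_meas
        (Filter.Eventually.of_forall hbound)
        ((MassAux.env_integrable n).const_mul _)
        (Filter.Eventually.of_forall fun z s _ => hderiv_pt s z)
    -- the integral of Fd t vanishes
    have hzero : ∫ z : Eucl n, MassAux.Fd u t z = 0 := by
      set v : Fin n → Eucl n := fun j => EuclideanSpace.single j (1:ℝ) with hv
      set w1 : Fin n → SchwartzMap (Eucl n) ℂ :=
        fun j => LineDeriv.lineDerivOp (v j) w with hw1
      set B : ℂ →L[ℝ] ℂ →L[ℝ] ℂ :=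
        Complex.I • ((ContinuousLinearMap.mul ℝ ℂ).comp
          (Complex.conjCLE.toContinuousLinearMap)) with hB
      set H : Fin n → SchwartzMap (Eucl n) ℂ :=
        fun j => SchwartzMap.bilinLeftCLM B (MassAux.schwartz_temperate (w1 j)) w with hH
      have hHapp : ∀ (j : Fin n) (z : Eucl n),
          (H j) z = Complex.I * ((starRingEnd ℂ) (w z) * (w1 j) z) := by
        intro j z
        show B (w z) ((w1 j) z) = _
        simp [hB, mul_assoc]
      have hw1app : ∀ (j : Fin n) (z : Eucl n), fderiv ℝ (⇑w) z (v j) = (w1 j) z := by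
        intro j z
        rw [hw1]
        exact (SchwartzMap.lineDerivOp_apply_eq_fderiv (v j) w z).symm
      have hpd2 : ∀ (j : Fin n) (z : Eucl n),
          pd j (pd j (u t)) z = fderiv ℝ (⇑(w1 j)) z (v j) := by
        intro j z
        have h1 : pd j (u t) = ⇑(w1 j) := by
          funext y
          rw [← hw]
          simp only [pd]
          rw [hw1]
          exact (SchwartzMap.lineDerivOp_apply_eq_fderiv (v j) w y).symm
        rw [pd, h1]
      have hfderivH : ∀ (j : Fin n) (z : Eucl n), fderiv ℝ (⇑(H j)) z (v j) =
          Complex.I * ((starRingEnd ℂ) ((w1 j) z) * (w1 j) z)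
          + Complex.I * ((starRingEnd ℂ) (w z) * fderiv ℝ (⇑(w1 j)) z (v j)) := by
        intro j z
        have hHfun : ⇑(H j) = fun y => Complex.I * ((starRingEnd ℂ) (w y) * (w1 j) y) :=
          funext fun y => hHapp j y
        have hwd : HasFDerivAt (⇑w) (fderiv ℝ (⇑w) z) z := w.differentiableAt.hasFDerivAt
        have hconj : HasFDerivAt (fun y => (starRingEnd ℂ) (w y))
            ((((starL' ℝ : ℂ ≃L[ℝ] ℂ) : ℂ →L[ℝ] ℂ)) ∘L (fderiv ℝ (⇑w) z)) z := hwd.star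
        have hw1d : HasFDerivAt (⇑(w1 j)) (fderiv ℝ (⇑(w1 j)) z) z :=
          (w1 j).differentiableAt.hasFDerivAt
        have hmul : HasFDerivAt (fun y => Complex.I * ((starRingEnd ℂ) (w y) * (w1 j) y)) _ z :=
          (hconj.mul hw1d).const_mul Complex.I
        rw [hHfun, hmul.fderiv]
        simp only [ContinuousLinearMap.smul_apply, ContinuousLinearMap.add_apply,
          ContinuousLinearMap.comp_apply, ContinuousLinearEquiv.coe_coe,
          starL'_apply, smul_eq_mul, RCLike.star_def]
        rw [hw1app j z]
        ring
      have hintH : ∀ j : Fin n, ∫ z : Eucl n, fderiv ℝ (⇑(H j)) z (v j) = 0 :=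
        fun j => MassAux.integral_fderiv_schwartz_zero (H j) (v j)
      -- pointwise identity
      have hpoint : ∀ z : Eucl n,
          MassAux.Fd u t z = ∑ j : Fin n, 2 * (fderiv ℝ (⇑(H j)) z (v j)).re := by
        intro z
        have hFd2 : MassAux.Fd u t z
            = 2 * ((starRingEnd ℂ) (u t z) * deriv (fun s => u s z) t).re := by
          simp only [MassAux.Fd, Complex.mul_re, Complex.conj_re, Complex.conj_im]
          ring
        rw [hFd2, hu.eqn t z]
        have expand : (starRingEnd ℂ) (u t z) * (Complex.I *
              (∑ j : Fin n, pd j (pd j (u t)) z - (V t z : ℂ) * u t z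
                - (‖u t z‖ : ℂ) ^ (p - 1) * u t z))
            = (∑ j : Fin n, (starRingEnd ℂ) (u t z) * (Complex.I * pd j (pd j (u t)) z))
              - (starRingEnd ℂ) (u t z) * (Complex.I * ((V t z : ℂ) * u t z))
              - (starRingEnd ℂ) (u t z) * (Complex.I * ((‖u t z‖ : ℂ) ^ (p - 1) * u t z)) := by
          simp only [mul_sub, Finset.mul_sum]
        rw [expand]
        rw [Complex.sub_re, Complex.sub_re]
        have hV0 : ((starRingEnd ℂ) (u t z) * (Complex.I * ((V t z : ℂ) * u t z))).re = 0 :=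
          MassAux.re_conj_mul_I_real (u t z) (V t z)
        have hN0 : ((starRingEnd ℂ) (u t z)
            * (Complex.I * ((‖u t z‖ : ℂ) ^ (p - 1) * u t z))).re = 0 := by
          rw [← Complex.ofReal_pow]
          exact MassAux.re_conj_mul_I_real (u t z) (‖u t z‖ ^ (p - 1))
        rw [hV0, hN0, sub_zero, sub_zero, Complex.re_sum, Finset.mul_sum]
        refine Finset.sum_congr rfl fun j _ => ?_
        rw [hfderivH j z, Complex.add_re, MassAux.re_I_mul_conj_self, zero_add]
        rw [← hpd2 j z, ← congrFun hw z]
        congr 1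
        ring
      have hterm_int : ∀ j : Fin n,
          Integrable (fun z : Eucl n => fderiv ℝ (⇑(H j)) z (v j)) volume := by
        intro j
        have h : (fun z : Eucl n => fderiv ℝ (⇑(H j)) z (v j))
            = ⇑(LineDeriv.lineDerivOp (v j) (H j)) := by
          funext z
          exact (SchwartzMap.lineDerivOp_apply_eq_fderiv (v j) (H j) z).symm
        rw [h]
        exact MassAux.schwartz_integrable _
      have hterm_int2 : ∀ j : Fin n,
          Integrable (fun z : Eucl n => 2 * (fderiv ℝ (⇑(H j)) z (v j)).re) volume := by
        intro j
        have := (hterm_int j).re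
        simpa using this.const_mul 2
      calc ∫ z : Eucl n, MassAux.Fd u t z
          = ∫ z : Eucl n, ∑ j : Fin n, 2 * (fderiv ℝ (⇑(H j)) z (v j)).re :=
            integral_congr_ae (Filter.Eventually.of_forall hpoint)
        _ = ∑ j : Fin n, ∫ z : Eucl n, 2 * (fderiv ℝ (⇑(H j)) z (v j)).re :=
            integral_finset_sum _ (fun j _ => hterm_int2 j)
        _ = 0 := by
            refine Finset.sum_eq_zero fun j _ => ?_
            have hsm := integral_smul (μ := (volume : Measure (Eucl n))) (2:ℝ)
              (fun z : Eucl n => (fderiv ℝ (⇑(H j)) z (v j)).re)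
            simp only [smul_eq_mul] at hsm
            rw [hsm]
            have h := integral_re (hterm_int j)
            simp only [RCLike.re_to_complex] at h
            rw [h, hintH j]
            simp
    rw [← hzero]
    exact hmain.2
  intro t
  exact is_const_of_deriv_eq_zero (fun s => (hM s).differentiableAt)
    (fun s => (hM s).deriv) t 0
end
end

section
/- Let u be a Schwartz-class solution of the defocusing nonlinear Schrödinger equation with potential V, where V : ℝ × ℝ^n → ℝ is continuous, smooth in z, and V together with its first z-derivatives is bounded on ℝ × ℝ^n. Then the energy E(t) is differentiable in t and E′(t) = Σ_{j=1}^n Im ∫_{ℝ^n} ∂_{z_j}V(t,z) · u(t,z) · conj(∂_{z_j}u(t,z)) dz for every t ∈ ℝ. -/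
open MeasureTheory Complex Filter

noncomputable section

section Aux
variable {n : ℕ} {u : ℝ → Eucl n → ℂ}

lemma aux_slice_contDiff (hU : ContDiff ℝ (⊤ : ℕ∞) (fun q : ℝ × Eucl n => u q.1 q.2)) (t : ℝ) :
    ContDiff ℝ (⊤ : ℕ∞) (u t) :=
  hU.comp (contDiff_const.prodMk contDiff_id)

lemma aux_mk_left (t : ℝ) (z : Eucl n) :
    HasDerivAt (fun s : ℝ => ((s, z) : ℝ × Eucl n)) ((1 : ℝ), (0 : Eucl n)) t := by
  have := ((hasDerivAt_id t).prodMk (hasDerivAt_const t z))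
  simpa using this

lemma aux_hasDerivAt_time (hU : ContDiff ℝ (⊤ : ℕ∞) (fun q : ℝ × Eucl n => u q.1 q.2)) (t : ℝ)
    (z : Eucl n) :
    HasDerivAt (fun s => u s z)
      (fderiv ℝ (fun q : ℝ × Eucl n => u q.1 q.2) (t, z) ((1 : ℝ), (0 : Eucl n))) t := by
  have hUz : HasFDerivAt (fun q : ℝ × Eucl n => u q.1 q.2)
      (fderiv ℝ (fun q : ℝ × Eucl n => u q.1 q.2) (t, z)) (t, z) :=
    (hU.differentiable (by simp) (t, z)).hasFDerivAt
  exact hUz.comp_hasDerivAt t (aux_mk_left t z)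

lemma aux_ut_eq (hU : ContDiff ℝ (⊤ : ℕ∞) (fun q : ℝ × Eucl n => u q.1 q.2)) (t : ℝ) (z : Eucl n) :
    deriv (fun s => u s z) t
      = fderiv ℝ (fun q : ℝ × Eucl n => u q.1 q.2) (t, z) ((1 : ℝ), (0 : Eucl n)) :=
  (aux_hasDerivAt_time hU t z).deriv

lemma aux_ut_contDiff (hU : ContDiff ℝ (⊤ : ℕ∞) (fun q : ℝ × Eucl n => u q.1 q.2)) (t : ℝ) :
    ContDiff ℝ (⊤ : ℕ∞) (fun z => deriv (fun s => u s z) t) := by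
  have h1 : ContDiff ℝ (⊤ : ℕ∞) (fderiv ℝ (fun q : ℝ × Eucl n => u q.1 q.2)) :=
    hU.fderiv_right (by simp)
  have h2 : ContDiff ℝ (⊤ : ℕ∞) (fun z : Eucl n =>
      fderiv ℝ (fun q : ℝ × Eucl n => u q.1 q.2) (t, z) ((1 : ℝ), (0 : Eucl n))) := by
    exact ((ContinuousLinearMap.apply ℝ ℂ ((1 : ℝ), (0 : Eucl n))).contDiff).comp
      (h1.comp (contDiff_const.prodMk contDiff_id))
  have e : (fun z : Eucl n => deriv (fun s => u s z) t) = fun z =>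
      fderiv ℝ (fun q : ℝ × Eucl n => u q.1 q.2) (t, z) ((1 : ℝ), (0 : Eucl n)) :=
    funext fun z => aux_ut_eq hU t z
  rw [e]; exact h2

end Aux

section Aux2
variable {n : ℕ} {u : ℝ → Eucl n → ℂ}

-- derivative of q ↦ fderiv U q v in a direction, for C^∞ U
lemma aux_hasFDerivAt_fderiv_apply {U : ℝ × Eucl n → ℂ} (hU : ContDiff ℝ (⊤ : ℕ∞) U)
    (q : ℝ × Eucl n) (v : ℝ × Eucl n) :
    HasFDerivAt (fun q' => fderiv ℝ U q' v)
      ((ContinuousLinearMap.apply ℝ ℂ v).comp (fderiv ℝ (fderiv ℝ U) q)) q := by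
  have h1 : ContDiff ℝ (⊤ : ℕ∞) (fderiv ℝ U) := hU.fderiv_right (by simp)
  have h2 : HasFDerivAt (fderiv ℝ U) (fderiv ℝ (fderiv ℝ U) q) q :=
    (h1.differentiable (by simp) q).hasFDerivAt
  exact (ContinuousLinearMap.apply ℝ ℂ v).hasFDerivAt.comp q h2

lemma aux_symm {U : ℝ × Eucl n → ℂ} (hU : ContDiff ℝ (⊤ : ℕ∞) U) (q a b : ℝ × Eucl n) :
    fderiv ℝ (fderiv ℝ U) q a b = fderiv ℝ (fderiv ℝ U) q b a := by
  have := (hU.contDiffAt (x := q)).isSymmSndFDerivAt (n := (⊤ : ℕ∞)) (by rw [minSmoothness_of_isRCLikeNormedField]; exact WithTop.coe_le_coe.mpr le_top)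
  exact this a b

/-- Time derivative of a spatial derivative equals spatial derivative of time derivative. -/
lemma aux_hasDerivAt_pd (hU : ContDiff ℝ (⊤ : ℕ∞) (fun q : ℝ × Eucl n => u q.1 q.2))
    (t : ℝ) (z : Eucl n) (j : Fin n) :
    HasDerivAt (fun s => pd j (u s) z)
      (pd j (fun w => deriv (fun s => u s w) t) z) t := by
  set U : ℝ × Eucl n → ℂ := fun q => u q.1 q.2 with hUdef
  set e : Eucl n := EuclideanSpace.single j 1
  have hmk : HasDerivAt (fun s : ℝ => ((s, z) : ℝ × Eucl n)) ((1 : ℝ), (0 : Eucl n)) t := by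
    simpa using ((hasDerivAt_id t).prodMk (hasDerivAt_const t z))
  -- the function s ↦ pd j (u s) z equals s ↦ fderiv U (s,z) (0,e)
  have hps : ∀ s w, pd j (u s) w = fderiv ℝ U (s, w) ((0 : ℝ), e) := by
    intro s w
    have hUz : HasFDerivAt U (fderiv ℝ U (s, w)) (s, w) :=
      (hU.differentiable (by simp) (s, w)).hasFDerivAt
    have h : HasFDerivAt (u s)
        ((fderiv ℝ U (s, w)).comp (ContinuousLinearMap.inr ℝ ℝ (Eucl n))) w :=
      hUz.comp w (hasFDerivAt_prodMk_right s w)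
    rw [pd, h.fderiv]; simp; rfl
  have h1 : HasDerivAt (fun s => fderiv ℝ U (s, z) ((0 : ℝ), e))
      (fderiv ℝ (fderiv ℝ U) (t, z) ((1 : ℝ), (0 : Eucl n)) ((0 : ℝ), e)) t := by
    have := (aux_hasFDerivAt_fderiv_apply hU (t, z) ((0 : ℝ), e)).comp_hasDerivAt t hmk
    exact this
  have h2 : HasDerivAt (fun s => pd j (u s) z)
      (fderiv ℝ (fderiv ℝ U) (t, z) ((1 : ℝ), (0 : Eucl n)) ((0 : ℝ), e)) t := by
    refine h1.congr_of_eventuallyEq ?_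
    filter_upwards with s using (hps s z)
  -- identify the derivative with pd j (ut t) z
  have hut : ∀ w, deriv (fun s => u s w) t = fderiv ℝ U (t, w) ((1 : ℝ), (0 : Eucl n)) := by
    intro w
    have hUz : HasFDerivAt U (fderiv ℝ U (t, w)) (t, w) :=
      (hU.differentiable (by simp) (t, w)).hasFDerivAt
    have hmk' : HasDerivAt (fun s : ℝ => ((s, w) : ℝ × Eucl n)) ((1 : ℝ), (0 : Eucl n)) t := by
      simpa using ((hasDerivAt_id t).prodMk (hasDerivAt_const t w))
    exact (hUz.comp_hasDerivAt t hmk').deriv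
  have h3 : pd j (fun w => deriv (fun s => u s w) t) z
      = fderiv ℝ (fderiv ℝ U) (t, z) ((0 : ℝ), e) ((1 : ℝ), (0 : Eucl n)) := by
    have hfd : HasFDerivAt (fun w : Eucl n => fderiv ℝ U (t, w) ((1 : ℝ), (0 : Eucl n)))
        (((ContinuousLinearMap.apply ℝ ℂ ((1 : ℝ), (0 : Eucl n))).comp
          (fderiv ℝ (fderiv ℝ U) (t, z))).comp (ContinuousLinearMap.inr ℝ ℝ (Eucl n))) z :=
      (aux_hasFDerivAt_fderiv_apply hU (t, z) ((1 : ℝ), (0 : Eucl n))).comp z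
        (hasFDerivAt_prodMk_right t z)
    have heq : (fun w : Eucl n => deriv (fun s => u s w) t)
        = fun w => fderiv ℝ U (t, w) ((1 : ℝ), (0 : Eucl n)) := funext hut
    rw [pd, heq, hfd.fderiv]; simp; rfl
  rw [h3, aux_symm hU]
  exact h2

lemma aux_norm_pd_le {f : Eucl n → ℂ} (z : Eucl n) (j : Fin n) :
    ‖pd j f z‖ ≤ ‖iteratedFDeriv ℝ 1 f z‖ := by
  have h1 : ‖pd j f z‖ ≤ ‖fderiv ℝ f z‖ * ‖EuclideanSpace.single j (1 : ℝ)‖ :=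
    (fderiv ℝ f z).le_opNorm _
  have h2 : ‖EuclideanSpace.single j (1 : ℝ)‖ = 1 := by
    rw [EuclideanSpace.norm_single]; norm_num
  have h3 : ‖fderiv ℝ f z‖ = ‖iteratedFDeriv ℝ 1 f z‖ := by
    rw [← norm_iteratedFDeriv_fderiv (n := 0), norm_iteratedFDeriv_zero]
  rw [h2, h3] at h1; simpa using h1

lemma aux_norm_pd_pd_le {f : Eucl n → ℂ} (hf : ContDiff ℝ (⊤ : ℕ∞) f) (z : Eucl n) (i j : Fin n) :
    ‖pd i (pd j f) z‖ ≤ ‖iteratedFDeriv ℝ 2 f z‖ := by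
  have hdf : ContDiff ℝ (⊤ : ℕ∞) (fderiv ℝ f) := hf.fderiv_right (by simp)
  have hfd0 : HasFDerivAt
      (⇑(ContinuousLinearMap.apply ℝ ℂ (EuclideanSpace.single j (1:ℝ))) ∘ (fderiv ℝ f))
      ((ContinuousLinearMap.apply ℝ ℂ (EuclideanSpace.single j 1)).comp
        (fderiv ℝ (fderiv ℝ f) z)) z :=
    (ContinuousLinearMap.apply ℝ ℂ (EuclideanSpace.single j 1)).hasFDerivAt.comp z
      ((hdf.differentiable (by simp) z).hasFDerivAt)
  have hfd : HasFDerivAt (fun w => fderiv ℝ f w (EuclideanSpace.single j 1))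
      ((ContinuousLinearMap.apply ℝ ℂ (EuclideanSpace.single j 1)).comp
        (fderiv ℝ (fderiv ℝ f) z)) z := hfd0
  have h0 : pd i (pd j f) z
      = fderiv ℝ (fderiv ℝ f) z (EuclideanSpace.single i 1) (EuclideanSpace.single j 1) := by
    simp only [pd]
    rw [show pd j f = (fun w => fderiv ℝ f w (EuclideanSpace.single j 1)) from rfl, hfd.fderiv]
    simp
  have h2a : fderiv ℝ (fderiv ℝ f) z (EuclideanSpace.single i 1) (EuclideanSpace.single j 1)
      = iteratedFDeriv ℝ 2 f z ![EuclideanSpace.single i 1, EuclideanSpace.single j 1] := by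
    rw [iteratedFDeriv_two_apply]; simp
  rw [h0, h2a]
  have hle := (iteratedFDeriv ℝ 2 f z).le_opNorm
    ![EuclideanSpace.single i (1:ℝ), EuclideanSpace.single j 1]
  have hprod : (∏ i₀ : Fin 2,
      ‖(![EuclideanSpace.single i (1:ℝ), EuclideanSpace.single j 1]) i₀‖) = 1 := by
    rw [Fin.prod_univ_two]
    simp [EuclideanSpace.norm_single]
  rw [hprod, mul_one] at hle
  exact hle

end Aux2

section Aux3
variable {n : ℕ}

lemma aux_rpow_eq (z : Eucl n) :
    (1 + ‖z‖) ^ (-(n + 1 : ℝ)) = ((1 + ‖z‖) ^ (n + 1))⁻¹ := by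
  have h0 : (0 : ℝ) ≤ 1 + ‖z‖ := by positivity
  rw [Real.rpow_neg h0]
  congr 1
  rw [← Real.rpow_natCast (1 + ‖z‖) (n + 1)]
  norm_num

lemma aux_integrable_omg :
    Integrable (fun z : Eucl n => (1 + ‖z‖) ^ (-(n + 1 : ℝ))) (volume : Measure (Eucl n)) := by
  apply integrable_one_add_norm
  rw [finrank_euclideanSpace_fin]
  exact_mod_cast lt_add_one (n : ℝ)

lemma aux_integrable_of_le {F : Type*} [NormedAddCommGroup F] {g : Eucl n → F}
    (hg : AEStronglyMeasurable g (volume : Measure (Eucl n))) {C : ℝ}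
    (h : ∀ z, ‖g z‖ ≤ C * (1 + ‖z‖) ^ (-(n + 1 : ℝ))) : Integrable g := by
  exact Integrable.mono' (aux_integrable_omg.const_mul C) hg (ae_of_all _ h)

lemma aux_decay {F : Type*} [NormedAddCommGroup F] {g : ℝ → Eucl n → F} {K : Set ℝ}
    (h : ∀ m : ℕ, ∃ C : ℝ, ∀ t ∈ K, ∀ z : Eucl n, ‖z‖ ^ m * ‖g t z‖ ≤ C) :
    ∃ C : ℝ, 0 ≤ C ∧ ∀ t ∈ K, ∀ z : Eucl n,
      ‖g t z‖ ≤ C * (1 + ‖z‖) ^ (-(n + 1 : ℝ)) := by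
  choose C hC using h
  refine ⟨∑ m ∈ Finset.range (n + 2), ((n + 1).choose m : ℝ) * max (C m) 0, ?_, ?_⟩
  · apply Finset.sum_nonneg
    intro m _
    positivity
  intro t ht z
  set D := ∑ m ∈ Finset.range (n + 2), ((n + 1).choose m : ℝ) * max (C m) 0 with hD
  have h1 : (0 : ℝ) < (1 + ‖z‖) ^ (n + 1) := by positivity
  rw [aux_rpow_eq, mul_comm, inv_mul_eq_div, le_div_iff₀ h1, mul_comm]
  have hexp : (1 + ‖z‖) ^ (n + 1) = ∑ m ∈ Finset.range (n + 2), ‖z‖ ^ m * ((n + 1).choose m : ℝ) := by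
    have := add_pow ‖z‖ (1 : ℝ) (n + 1)
    simp only [one_pow, mul_one] at this
    rw [add_comm 1 ‖z‖, this]
  rw [hexp, Finset.sum_mul]
  apply Finset.sum_le_sum
  intro m _
  have h2 : ‖z‖ ^ m * ‖g t z‖ ≤ max (C m) 0 := le_trans (hC m t ht z) (le_max_left _ _)
  calc ‖z‖ ^ m * ((n + 1).choose m : ℝ) * ‖g t z‖
      = ((n + 1).choose m : ℝ) * (‖z‖ ^ m * ‖g t z‖) := by ring
    _ ≤ ((n + 1).choose m : ℝ) * max (C m) 0 := by
        apply mul_le_mul_of_nonneg_left h2 (by positivity)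

end Aux3


section Aux4

lemma aux_hasDerivAt_normSq {g : ℝ → ℂ} {g' : ℂ} {t : ℝ} (hg : HasDerivAt g g' t) :
    HasDerivAt (fun s => Complex.normSq (g s)) (2 * ((starRingEnd ℂ) (g t) * g').re) t := by
  have hre : HasDerivAt (fun s => (g s).re) g'.re t :=
    Complex.reCLM.hasFDerivAt.comp_hasDerivAt t hg
  have him : HasDerivAt (fun s => (g s).im) g'.im t :=
    Complex.imCLM.hasFDerivAt.comp_hasDerivAt t hg
  have h := (hre.fun_mul hre).fun_add (him.fun_mul him)
  have heq : (fun s => (g s).re * (g s).re + (g s).im * (g s).im)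
      = fun s => Complex.normSq (g s) := by
    funext s; rw [Complex.normSq_apply]
  rw [heq] at h
  refine h.congr_deriv ?_
  simp [Complex.mul_re]
  ring

lemma aux_norm_pow_even (w : ℂ) (k : ℕ) : ‖w‖ ^ (2 * k) = Complex.normSq w ^ k := by
  rw [pow_mul, Complex.normSq_eq_norm_sq]

lemma aux_hasDerivAt_normPow {g : ℝ → ℂ} {g' : ℂ} {t : ℝ} (hg : HasDerivAt g g' t)
    (k : ℕ) (hk : 1 ≤ k) :
    HasDerivAt (fun s => ‖g s‖ ^ (2 * k))
      ((2 * k : ℝ) * ‖g t‖ ^ (2 * k - 2) * ((starRingEnd ℂ) (g t) * g').re) t := by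
  have hN := (aux_hasDerivAt_normSq hg).fun_pow k
  have heq : (fun s => Complex.normSq (g s) ^ k) = fun s => ‖g s‖ ^ (2 * k) := by
    funext s; rw [aux_norm_pow_even]
  rw [heq] at hN
  refine hN.congr_deriv ?_
  have h1 : Complex.normSq (g t) ^ (k - 1) = ‖g t‖ ^ (2 * k - 2) := by
    rw [← aux_norm_pow_even]
    congr 1
    omega
  rw [← h1]
  push_cast [Nat.cast_sub hk]
  ring

end Aux4


section Aux5
variable {n : ℕ}

lemma aux_omg_pos (z : Eucl n) : 0 < (1 + ‖z‖) ^ (-(n + 1 : ℝ)) := by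
  rw [aux_rpow_eq]; positivity

lemma aux_omg_le_one (z : Eucl n) : (1 + ‖z‖) ^ (-(n + 1 : ℝ)) ≤ 1 := by
  rw [aux_rpow_eq]
  have h1 : (1 : ℝ) ≤ 1 + ‖z‖ := by have := norm_nonneg z; linarith
  have h2 : (1 : ℝ) ≤ (1 + ‖z‖) ^ (n + 1) := one_le_pow₀ h1
  exact inv_le_one_of_one_le₀ h2

lemma aux_norm_sq_eq (w : ℂ) : ‖w‖ ^ 2 = Complex.normSq w := by
  simpa using aux_norm_pow_even w 1

lemma aux_pd_contDiff {f : Eucl n → ℂ} (hf : ContDiff ℝ (⊤ : ℕ∞) f) (j : Fin n) :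
    ContDiff ℝ (⊤ : ℕ∞) (pd j f) :=
  (ContinuousLinearMap.apply ℝ ℂ (EuclideanSpace.single j (1 : ℝ))).contDiff.comp
    (hf.fderiv_right (by simp))

lemma aux_kinetic {n p : ℕ} {V : ℝ → Eucl n → ℝ} {u : ℝ → Eucl n → ℂ}
    (hu : IsNLSSolution n p V u) (t₀ : ℝ) :
    HasDerivAt (fun t => ∫ z : Eucl n, ∑ j, ‖pd j (u t) z‖ ^ 2)
      (∫ z : Eucl n, ∑ j, 2 * ((starRingEnd ℂ) (pd j (u t₀) z) *
        pd j (fun w => deriv (fun s => u s w) t₀) z).re) t₀ := by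
  have hU := hu.smooth
  set ut : ℝ → Eucl n → ℂ := fun t w => deriv (fun s => u s w) t with hut
  set K : Set ℝ := Set.Icc (t₀ - 1) (t₀ + 1) with hK
  have hKc : IsCompact K := isCompact_Icc
  obtain ⟨C1, hC1pos, hC1⟩ := aux_decay (K := K)
    (g := fun t z => iteratedFDeriv ℝ 1 (u t) z)
    (fun m => ⟨(hu.locUnifBound m 1 K hKc).choose,
      fun t ht z => ((hu.locUnifBound m 1 K hKc).choose_spec t ht z).1⟩)
  obtain ⟨D1, hD1pos, hD1⟩ := aux_decay (K := K)
    (g := fun t z => iteratedFDeriv ℝ 1 (ut t) z)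
    (fun m => ⟨(hu.locUnifBound m 1 K hKc).choose,
      fun t ht z => ((hu.locUnifBound m 1 K hKc).choose_spec t ht z).2⟩)
  have hpd : ∀ t ∈ K, ∀ (z : Eucl n) (j : Fin n),
      ‖pd j (u t) z‖ ≤ C1 * (1 + ‖z‖) ^ (-(n + 1 : ℝ)) :=
    fun t ht z j => le_trans (aux_norm_pd_le z j) (hC1 t ht z)
  have hpd' : ∀ t ∈ K, ∀ (z : Eucl n) (j : Fin n),
      ‖pd j (ut t) z‖ ≤ D1 * (1 + ‖z‖) ^ (-(n + 1 : ℝ)) :=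
    fun t ht z j => le_trans (aux_norm_pd_le z j) (hD1 t ht z)
  have ht₀K : t₀ ∈ K := by
    simp only [hK, Set.mem_Icc]; constructor <;> linarith
  have hcontF : ∀ t, Continuous (fun z : Eucl n => ∑ j, ‖pd j (u t) z‖ ^ 2) := by
    intro t
    exact continuous_finset_sum _ (fun j _ =>
      ((aux_pd_contDiff (aux_slice_contDiff hU t) j).continuous.norm.pow 2))
  have hcontF' : Continuous (fun z : Eucl n => ∑ j : Fin n,
      2 * ((starRingEnd ℂ) (pd j (u t₀) z) * pd j (ut t₀) z).re) := by
    apply continuous_finset_sum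
    intro j _
    have h1 : Continuous (pd j (u t₀)) := (aux_pd_contDiff (aux_slice_contDiff hU t₀) j).continuous
    have h2 : Continuous (pd j (ut t₀)) :=
      (aux_pd_contDiff (aux_ut_contDiff hU t₀) j).continuous
    exact continuous_const.mul (Complex.continuous_re.comp ((Complex.continuous_conj.comp h1).mul h2))
  have hball : Metric.ball t₀ 1 ⊆ K := by
    intro t ht
    have h := Metric.mem_ball.mp ht
    rw [Real.dist_eq] at h
    obtain ⟨h1, h2⟩ := abs_lt.mp h
    simp only [hK, Set.mem_Icc]; constructor <;> linarith
  have main := hasDerivAt_integral_of_dominated_loc_of_deriv_le (μ := (volume : Measure (Eucl n))) (x₀ := t₀)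
    (F := fun t z => ∑ j, ‖pd j (u t) z‖ ^ 2)
    (F' := fun t z => ∑ j : Fin n, 2 * ((starRingEnd ℂ) (pd j (u t) z) * pd j (ut t) z).re)
    (bound := fun z => (n : ℝ) * (2 * C1 * D1) * (1 + ‖z‖) ^ (-(n + 1 : ℝ)))
    (Metric.ball_mem_nhds t₀ one_pos)
    (Eventually.of_forall (fun t => (hcontF t).aestronglyMeasurable))
    ?hFint ?hF'meas ?hbound ?hbint ?hdiff
  · exact main.2
  case hFint =>
    apply aux_integrable_of_le (C := (n : ℝ) * C1 ^ 2) (hcontF t₀).aestronglyMeasurable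
    intro z
    have h0 : ∀ j : Fin n, ‖pd j (u t₀) z‖ ^ 2
        ≤ C1 ^ 2 * (1 + ‖z‖) ^ (-(n + 1 : ℝ)) := by
      intro j
      have h1 := hpd t₀ ht₀K z j
      have h2 := aux_omg_le_one z
      have h3 := (aux_omg_pos z).le
      have h4 := norm_nonneg (pd j (u t₀) z)
      have h5 : ‖pd j (u t₀) z‖ ^ 2 ≤ (C1 * (1 + ‖z‖) ^ (-(n + 1 : ℝ))) ^ 2 :=
        pow_le_pow_left₀ h4 h1 2
      nlinarith [mul_le_mul_of_nonneg_left h2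
        (mul_nonneg (mul_nonneg hC1pos hC1pos) h3)]
    calc ‖∑ j : Fin n, ‖pd j (u t₀) z‖ ^ 2‖
        = ∑ j : Fin n, ‖pd j (u t₀) z‖ ^ 2 := by
          rw [Real.norm_eq_abs, _root_.abs_of_nonneg]
          exact Finset.sum_nonneg (fun j _ => sq_nonneg _)
      _ ≤ ∑ _j : Fin n, C1 ^ 2 * (1 + ‖z‖) ^ (-(n + 1 : ℝ)) :=
          Finset.sum_le_sum (fun j _ => h0 j)
      _ = (n : ℝ) * C1 ^ 2 * (1 + ‖z‖) ^ (-(n + 1 : ℝ)) := by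
          rw [Finset.sum_const, Finset.card_univ, Fintype.card_fin, nsmul_eq_mul]; ring
  case hF'meas => exact hcontF'.aestronglyMeasurable
  case hbound =>
    apply ae_of_all
    intro z t ht
    have htK := hball ht
    have h2 := aux_omg_le_one z
    have h3 := (aux_omg_pos z).le
    calc ‖∑ j : Fin n, 2 * ((starRingEnd ℂ) (pd j (u t) z) * pd j (ut t) z).re‖
        ≤ ∑ j : Fin n, ‖2 * ((starRingEnd ℂ) (pd j (u t) z) * pd j (ut t) z).re‖ :=
          norm_sum_le _ _
      _ ≤ ∑ _j : Fin n, 2 * C1 * D1 * (1 + ‖z‖) ^ (-(n + 1 : ℝ)) := by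
          apply Finset.sum_le_sum
          intro j _
          have h5 : |((starRingEnd ℂ) (pd j (u t) z) * pd j (ut t) z).re|
              ≤ ‖pd j (u t) z‖ * ‖pd j (ut t) z‖ := by
            refine le_trans (Complex.abs_re_le_norm _) ?_
            rw [norm_mul, RCLike.norm_conj]
          have h6 := hpd t htK z j
          have h7 := hpd' t htK z j
          have h8 := norm_nonneg (pd j (u t) z)
          have h9 := norm_nonneg (pd j (ut t) z)
          rw [norm_mul, Real.norm_eq_abs, Real.norm_eq_abs]
          have habs2 : |(2:ℝ)| = 2 := by norm_num
          rw [habs2]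
          have h10 : ‖pd j (u t) z‖ * ‖pd j (ut t) z‖
              ≤ (C1 * (1 + ‖z‖) ^ (-(n + 1 : ℝ))) * (D1 * (1 + ‖z‖) ^ (-(n + 1 : ℝ))) :=
            mul_le_mul h6 h7 h9 (by positivity)
          nlinarith [mul_le_mul_of_nonneg_left h2
            (mul_nonneg (mul_nonneg hC1pos hD1pos) h3)]
      _ = (n : ℝ) * (2 * C1 * D1) * (1 + ‖z‖) ^ (-(n + 1 : ℝ)) := by
          rw [Finset.sum_const, Finset.card_univ, Fintype.card_fin, nsmul_eq_mul]; ring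
  case hbint =>
    exact aux_integrable_omg.const_mul _
  case hdiff =>
    apply ae_of_all
    intro z t _
    apply HasDerivAt.fun_sum
    intro j _
    have h := aux_hasDerivAt_normSq (aux_hasDerivAt_pd hU t z j)
    have heq : (fun s => Complex.normSq (pd j (u s) z)) = fun s => ‖pd j (u s) z‖ ^ 2 := by
      funext s; rw [aux_norm_sq_eq]
    rw [heq] at h
    exact h

lemma aux_potential {n p : ℕ} {V : ℝ → Eucl n → ℝ} {u : ℝ → Eucl n → ℂ}
    (hu : IsNLSSolution n p V u) (hodd : Odd p) (hp3 : 3 ≤ p) (t₀ : ℝ) :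
    HasDerivAt (fun t => ∫ z : Eucl n, ‖u t z‖ ^ (p + 1))
      (∫ z : Eucl n, ((p : ℝ) + 1) * ‖u t₀ z‖ ^ (p - 1) *
        ((starRingEnd ℂ) (u t₀ z) * deriv (fun s => u s z) t₀).re) t₀ := by
  have hU := hu.smooth
  set ut : ℝ → Eucl n → ℂ := fun t w => deriv (fun s => u s w) t with hut
  obtain ⟨k, hk⟩ : ∃ k, p + 1 = 2 * k := by
    obtain ⟨m, hm⟩ := hodd
    exact ⟨m + 1, by omega⟩
  have hk1 : 1 ≤ k := by omega
  set K : Set ℝ := Set.Icc (t₀ - 1) (t₀ + 1) with hK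
  have hKc : IsCompact K := isCompact_Icc
  obtain ⟨C0, hC0pos, hC0⟩ := aux_decay (K := K)
    (g := fun t z => iteratedFDeriv ℝ 0 (u t) z)
    (fun m => ⟨(hu.locUnifBound m 0 K hKc).choose,
      fun t ht z => ((hu.locUnifBound m 0 K hKc).choose_spec t ht z).1⟩)
  obtain ⟨D0, hD0pos, hD0⟩ := aux_decay (K := K)
    (g := fun t z => iteratedFDeriv ℝ 0 (ut t) z)
    (fun m => ⟨(hu.locUnifBound m 0 K hKc).choose,
      fun t ht z => ((hu.locUnifBound m 0 K hKc).choose_spec t ht z).2⟩)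
  have hu0 : ∀ t ∈ K, ∀ z : Eucl n, ‖u t z‖ ≤ C0 * (1 + ‖z‖) ^ (-(n + 1 : ℝ)) := by
    intro t ht z
    have := hC0 t ht z
    rwa [norm_iteratedFDeriv_zero] at this
  have hu0' : ∀ t ∈ K, ∀ z : Eucl n, ‖ut t z‖ ≤ D0 * (1 + ‖z‖) ^ (-(n + 1 : ℝ)) := by
    intro t ht z
    have := hD0 t ht z
    rwa [norm_iteratedFDeriv_zero] at this
  have ht₀K : t₀ ∈ K := by
    simp only [hK, Set.mem_Icc]; constructor <;> linarith
  have hball : Metric.ball t₀ 1 ⊆ K := by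
    intro t ht
    have h := Metric.mem_ball.mp ht
    rw [Real.dist_eq] at h
    obtain ⟨h1, h2⟩ := abs_lt.mp h
    simp only [hK, Set.mem_Icc]; constructor <;> linarith
  have hcontu : ∀ t, Continuous (u t) := fun t => (aux_slice_contDiff hU t).continuous
  have hcontut : ∀ t, Continuous (ut t) := fun t => (aux_ut_contDiff hU t).continuous
  have hdiffu : ∀ (t : ℝ) (z : Eucl n), HasDerivAt (fun s => u s z) (ut t z) t := by
    intro t z
    have hd : DifferentiableAt ℝ (fun s : ℝ => u s z) t := by
      have h1 : Differentiable ℝ (fun s : ℝ => ((s, z) : ℝ × Eucl n)) :=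
        differentiable_id.prodMk (differentiable_const z)
      exact ((hU.differentiable (by simp)).comp h1) t
    exact hd.hasDerivAt
  have main := hasDerivAt_integral_of_dominated_loc_of_deriv_le (μ := (volume : Measure (Eucl n))) (x₀ := t₀)
    (F := fun t z => ‖u t z‖ ^ (p + 1))
    (F' := fun t z => ((p : ℝ) + 1) * ‖u t z‖ ^ (p - 1) *
        ((starRingEnd ℂ) (u t z) * ut t z).re)
    (bound := fun z => ((p : ℝ) + 1) * C0 ^ (p - 1) * C0 * D0 * (1 + ‖z‖) ^ (-(n + 1 : ℝ)))
    (Metric.ball_mem_nhds t₀ one_pos)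
    (Eventually.of_forall (fun t => ((hcontu t).norm.pow (p + 1)).aestronglyMeasurable))
    ?hFint ?hF'meas ?hbound ?hbint ?hdiff
  · exact main.2
  case hFint =>
    apply aux_integrable_of_le (C := C0 ^ (p + 1)) ((hcontu t₀).norm.pow (p + 1)).aestronglyMeasurable
    intro z
    have h1 := hu0 t₀ ht₀K z
    have h2 := aux_omg_le_one z
    have h3 := (aux_omg_pos z).le
    have h4 := norm_nonneg (u t₀ z)
    calc ‖‖u t₀ z‖ ^ (p + 1)‖ = ‖u t₀ z‖ ^ (p + 1) := by
          rw [Real.norm_eq_abs, _root_.abs_of_nonneg (pow_nonneg h4 _)]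
      _ = ‖u t₀ z‖ ^ p * ‖u t₀ z‖ := by ring
      _ ≤ C0 ^ p * (C0 * (1 + ‖z‖) ^ (-(n + 1 : ℝ))) := by
          apply mul_le_mul _ h1 h4 (by positivity)
          apply pow_le_pow_left₀ h4
          nlinarith
      _ = C0 ^ (p + 1) * (1 + ‖z‖) ^ (-(n + 1 : ℝ)) := by ring
  case hF'meas =>
    apply Continuous.aestronglyMeasurable
    exact (((continuous_const.mul ((hcontu t₀).norm.pow (p - 1)))).mul
      (Complex.continuous_re.comp
        ((Complex.continuous_conj.comp (hcontu t₀)).mul (hcontut t₀))))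
  case hbound =>
    apply ae_of_all
    intro z t ht
    have htK := hball ht
    have h1 := hu0 t htK z
    have h1' := hu0' t htK z
    have h2 := aux_omg_le_one z
    have h3 := (aux_omg_pos z).le
    have h4 := norm_nonneg (u t z)
    have h4' := norm_nonneg (ut t z)
    have h5 : |((starRingEnd ℂ) (u t z) * ut t z).re| ≤ ‖u t z‖ * ‖ut t z‖ := by
      refine le_trans (Complex.abs_re_le_norm _) ?_
      rw [norm_mul, RCLike.norm_conj]
    have h6 : ‖u t z‖ ^ (p - 1) ≤ C0 ^ (p - 1) := by
      apply pow_le_pow_left₀ h4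
      nlinarith
    have h7 : ‖u t z‖ ≤ C0 := by nlinarith
    rw [norm_mul, norm_mul, Real.norm_eq_abs, Real.norm_eq_abs, Real.norm_eq_abs]
    rw [_root_.abs_of_nonneg (by positivity : (0:ℝ) ≤ (p : ℝ) + 1),
      _root_.abs_of_nonneg (pow_nonneg h4 _)]
    have h8 : 0 ≤ C0 ^ (p - 1) := pow_nonneg (by nlinarith) _
    calc ((p : ℝ) + 1) * ‖u t z‖ ^ (p - 1) * |((starRingEnd ℂ) (u t z) * ut t z).re|
        ≤ ((p : ℝ) + 1) * C0 ^ (p - 1) * (C0 * (D0 * (1 + ‖z‖) ^ (-(n + 1 : ℝ)))) := by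
          have hb : |((starRingEnd ℂ) (u t z) * ut t z).re|
              ≤ C0 * (D0 * (1 + ‖z‖) ^ (-(n + 1 : ℝ))) := by
            refine le_trans h5 ?_
            have := mul_le_mul h7 h1' h4' (by nlinarith)
            linarith
          apply mul_le_mul
          · apply mul_le_mul_of_nonneg_left h6 (by positivity)
          · exact hb
          · positivity
          · positivity
      _ = ((p : ℝ) + 1) * C0 ^ (p - 1) * C0 * D0 * (1 + ‖z‖) ^ (-(n + 1 : ℝ)) := by ring
  case hbint =>
    exact aux_integrable_omg.const_mul _
  case hdiff =>
    apply ae_of_all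
    intro z t _
    have h := aux_hasDerivAt_normPow (hdiffu t z) k hk1
    have heq : (fun s => ‖u s z‖ ^ (2 * k)) = fun s => ‖u s z‖ ^ (p + 1) := by
      funext s; rw [← hk]
    rw [heq] at h
    have hc : (2 * (k : ℝ)) * ‖u t z‖ ^ (2 * k - 2) = ((p : ℝ) + 1) * ‖u t z‖ ^ (p - 1) := by
      have e1 : (2 * (k : ℝ)) = (p : ℝ) + 1 := by
        have : ((2 * k : ℕ) : ℝ) = ((p + 1 : ℕ) : ℝ) := by rw [← hk]
        push_cast at this
        linarith
      have e2 : 2 * k - 2 = p - 1 := by omega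
      rw [e1, e2]
    rw [hc] at h
    exact h

end Aux5

section Aux6
variable {n : ℕ}

lemma aux_conj_diff {φ : Eucl n → ℂ} (hφ : Differentiable ℝ φ) :
    Differentiable ℝ (fun w => (starRingEnd ℂ) (φ w)) := by
  have : Differentiable ℝ (⇑Complex.conjCLE ∘ φ) :=
    Complex.conjCLE.toContinuousLinearMap.differentiable.comp hφ
  exact this

lemma aux_fderiv_conj {φ : Eucl n → ℂ} (hφ : Differentiable ℝ φ) (z : Eucl n) (v : Eucl n) :
    fderiv ℝ (fun w => (starRingEnd ℂ) (φ w)) z v = (starRingEnd ℂ) (fderiv ℝ φ z v) := by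
  have h0 : HasFDerivAt (⇑Complex.conjCLE ∘ φ)
      ((Complex.conjCLE.toContinuousLinearMap).comp (fderiv ℝ φ z)) z :=
    Complex.conjCLE.toContinuousLinearMap.hasFDerivAt.comp z (hφ z).hasFDerivAt
  have h : HasFDerivAt (fun w => (starRingEnd ℂ) (φ w))
      ((Complex.conjCLE.toContinuousLinearMap).comp (fderiv ℝ φ z)) z := by
    refine h0.congr_of_eventuallyEq ?_
    filter_upwards with w
    simp [Function.comp, Complex.conjCLE_apply]
  rw [h.fderiv]
  simp [Complex.conjCLE_apply]

lemma aux_ofReal_diff {φ : Eucl n → ℝ} (hφ : Differentiable ℝ φ) :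
    Differentiable ℝ (fun w => ((φ w : ℝ) : ℂ)) :=
  Complex.ofRealCLM.differentiable.comp hφ

lemma aux_fderiv_ofReal {φ : Eucl n → ℝ} (hφ : Differentiable ℝ φ) (z : Eucl n) (v : Eucl n) :
    fderiv ℝ (fun w => ((φ w : ℝ) : ℂ)) z v = ((fderiv ℝ φ z v : ℝ) : ℂ) := by
  have h : HasFDerivAt (fun w => ((φ w : ℝ) : ℂ))
      (Complex.ofRealCLM.comp (fderiv ℝ φ z)) z :=
    Complex.ofRealCLM.hasFDerivAt.comp z (hφ z).hasFDerivAt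
  rw [h.fderiv]; simp

lemma aux_fderiv_mul {a b : Eucl n → ℂ} (ha : Differentiable ℝ a) (hb : Differentiable ℝ b)
    (z : Eucl n) (v : Eucl n) :
    fderiv ℝ (fun w => a w * b w) z v = fderiv ℝ a z v * b z + a z * fderiv ℝ b z v := by
  rw [fderiv_fun_mul (ha z) (hb z)]
  simp [smul_eq_mul]
  ring

lemma aux_ibp {a b : Eucl n → ℂ} (ha : Differentiable ℝ a) (hb : Differentiable ℝ b)
    (j : Fin n)
    (h1 : Integrable (fun z => fderiv ℝ a z (EuclideanSpace.single j 1) * b z)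
      (volume : Measure (Eucl n)))
    (h2 : Integrable (fun z => a z * fderiv ℝ b z (EuclideanSpace.single j 1))
      (volume : Measure (Eucl n)))
    (h3 : Integrable (fun z => a z * b z) (volume : Measure (Eucl n))) :
    ∫ z : Eucl n, a z * fderiv ℝ b z (EuclideanSpace.single j 1)
      = - ∫ z : Eucl n, fderiv ℝ a z (EuclideanSpace.single j 1) * b z :=
  integral_mul_fderiv_eq_neg_fderiv_mul_of_integrable h1 h2 h3 (fun x _ => ha x) (fun x _ => hb x)

end Aux6

section Aux7
variable {n : ℕ}

lemma aux_int_mul {a b : Eucl n → ℂ} {Ca Cb : ℝ} (hca : Continuous a) (hcb : Continuous b)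
    (hA : ∀ z, ‖a z‖ ≤ Ca * (1 + ‖z‖) ^ (-(n + 1 : ℝ))) (hB : ∀ z, ‖b z‖ ≤ Cb) :
    Integrable (fun z : Eucl n => a z * b z) (volume : Measure (Eucl n)) := by
  apply aux_integrable_of_le (C := Ca * Cb) ((hca.fun_mul hcb).aestronglyMeasurable)
  intro z
  rw [norm_mul]
  calc ‖a z‖ * ‖b z‖
      ≤ (Ca * (1 + ‖z‖) ^ (-(n + 1 : ℝ))) * Cb :=
        mul_le_mul (hA z) (hB z) (norm_nonneg _) (le_trans (norm_nonneg _) (hA z))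
    _ = Ca * Cb * (1 + ‖z‖) ^ (-(n + 1 : ℝ)) := by ring

lemma aux_partII {p : ℕ} (hodd : Odd p) (hp3 : 3 ≤ p)
    {f h : Eucl n → ℂ} {W : Eucl n → ℝ}
    (hfsm : ContDiff ℝ (⊤ : ℕ∞) f) (hhsm : ContDiff ℝ (⊤ : ℕ∞) h) (hWsm : ContDiff ℝ (⊤ : ℕ∞) W)
    {CV : ℝ} (hCV : ∀ z, |W z| ≤ CV ∧
      ∀ j : Fin n, |fderiv ℝ W z (EuclideanSpace.single j 1)| ≤ CV)
    (hdec : ∀ m l : ℕ, ∃ C : ℝ, ∀ z : Eucl n,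
      ‖z‖ ^ m * ‖iteratedFDeriv ℝ l f z‖ ≤ C ∧ ‖z‖ ^ m * ‖iteratedFDeriv ℝ l h z‖ ≤ C)
    (heqn : ∀ z, h z = Complex.I * ((∑ j, pd j (pd j f) z)
      - ((W z : ℝ) : ℂ) * f z - ((‖f z‖ : ℝ) : ℂ) ^ (p - 1) * f z)) :
    (1/2 : ℝ) * (∫ z : Eucl n, ∑ j, 2 * ((starRingEnd ℂ) (pd j f z) * pd j h z).re)
      + (1/((p : ℝ)+1)) * (∫ z : Eucl n, ((p : ℝ) + 1) * ‖f z‖ ^ (p - 1) *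
        ((starRingEnd ℂ) (f z) * h z).re)
    = ∑ j : Fin n, (∫ z : Eucl n,
        ((fderiv ℝ W z (EuclideanSpace.single j 1) : ℝ) : ℂ) * f z *
          (starRingEnd ℂ) (pd j f z)).im := by
  classical
  -- decay constants
  obtain ⟨C0, hC0n, hC0'⟩ := aux_decay (K := ({0} : Set ℝ))
    (g := fun _ z => iteratedFDeriv ℝ 0 f z)
    (fun m => ⟨(hdec m 0).choose, fun t _ z => ((hdec m 0).choose_spec z).1⟩)
  obtain ⟨C1, hC1n, hC1'⟩ := aux_decay (K := ({0} : Set ℝ))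
    (g := fun _ z => iteratedFDeriv ℝ 1 f z)
    (fun m => ⟨(hdec m 1).choose, fun t _ z => ((hdec m 1).choose_spec z).1⟩)
  obtain ⟨C2, hC2n, hC2'⟩ := aux_decay (K := ({0} : Set ℝ))
    (g := fun _ z => iteratedFDeriv ℝ 2 f z)
    (fun m => ⟨(hdec m 2).choose, fun t _ z => ((hdec m 2).choose_spec z).1⟩)
  obtain ⟨D0, hD0n, hD0'⟩ := aux_decay (K := ({0} : Set ℝ))
    (g := fun _ z => iteratedFDeriv ℝ 0 h z)
    (fun m => ⟨(hdec m 0).choose, fun t _ z => ((hdec m 0).choose_spec z).2⟩)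
  obtain ⟨D1, hD1n, hD1'⟩ := aux_decay (K := ({0} : Set ℝ))
    (g := fun _ z => iteratedFDeriv ℝ 1 h z)
    (fun m => ⟨(hdec m 1).choose, fun t _ z => ((hdec m 1).choose_spec z).2⟩)
  have h0mem : (0 : ℝ) ∈ ({0} : Set ℝ) := rfl
  have hf0 : ∀ z, ‖f z‖ ≤ C0 * (1 + ‖z‖) ^ (-(n + 1 : ℝ)) := by
    intro z; have := hC0' 0 h0mem z; rwa [norm_iteratedFDeriv_zero] at this
  have hh0 : ∀ z, ‖h z‖ ≤ D0 * (1 + ‖z‖) ^ (-(n + 1 : ℝ)) := by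
    intro z; have := hD0' 0 h0mem z; rwa [norm_iteratedFDeriv_zero] at this
  have hf1 : ∀ (j : Fin n) z, ‖pd j f z‖ ≤ C1 * (1 + ‖z‖) ^ (-(n + 1 : ℝ)) :=
    fun j z => le_trans (aux_norm_pd_le z j) (hC1' 0 h0mem z)
  have hh1 : ∀ (j : Fin n) z, ‖pd j h z‖ ≤ D1 * (1 + ‖z‖) ^ (-(n + 1 : ℝ)) :=
    fun j z => le_trans (aux_norm_pd_le z j) (hD1' 0 h0mem z)
  have hf2 : ∀ (j : Fin n) z, ‖pd j (pd j f) z‖ ≤ C2 * (1 + ‖z‖) ^ (-(n + 1 : ℝ)) :=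
    fun j z => le_trans (aux_norm_pd_pd_le hfsm z j j) (hC2' 0 h0mem z)
  -- crude bounds
  have homle : ∀ z : Eucl n, (1 + ‖z‖) ^ (-(n + 1 : ℝ)) ≤ 1 := aux_omg_le_one
  have homn : ∀ z : Eucl n, 0 ≤ (1 + ‖z‖) ^ (-(n + 1 : ℝ)) := fun z => (aux_omg_pos z).le
  have hbd : ∀ {φ : Eucl n → ℂ} {C : ℝ}, 0 ≤ C →
      (∀ z, ‖φ z‖ ≤ C * (1 + ‖z‖) ^ (-(n + 1 : ℝ))) → ∀ z, ‖φ z‖ ≤ C := by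
    intro φ C hC hφ z
    refine le_trans (hφ z) ?_
    nlinarith [homle z, homn z]
  have hbf : ∀ z, ‖f z‖ ≤ C0 := hbd hC0n hf0
  have hbh : ∀ z, ‖h z‖ ≤ D0 := hbd hD0n hh0
  have hbf1 : ∀ (j : Fin n) z, ‖pd j f z‖ ≤ C1 := fun j => hbd hC1n (hf1 j)
  have hbh1 : ∀ (j : Fin n) z, ‖pd j h z‖ ≤ D1 := fun j => hbd hD1n (hh1 j)
  have hbf2 : ∀ (j : Fin n) z, ‖pd j (pd j f) z‖ ≤ C2 := fun j => hbd hC2n (hf2 j)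
  have hCVn : 0 ≤ CV := le_trans (abs_nonneg _) (hCV 0).1
  -- abbreviations
  set Nf : Eucl n → ℂ := fun z => ((‖f z‖ : ℝ) : ℂ) ^ (p - 1) with hNf
  set Vc : Eucl n → ℂ := fun z => ((W z : ℝ) : ℂ) with hVcdef
  set S : Eucl n → ℂ := fun z => ∑ j, pd j (pd j f) z with hSdef
  set A : Eucl n → ℂ := fun z => S z - Nf z * f z with hAdef
  have heq : ∀ z, h z = Complex.I * (A z - Vc z * f z) := by
    intro z
    rw [heqn z, hAdef, hSdef, hNf, hVcdef]
    ring
  -- continuity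
  have hc_f : Continuous f := hfsm.continuous
  have hc_h : Continuous h := hhsm.continuous
  have hc_pdf : ∀ j, Continuous (pd j f) := fun j => (aux_pd_contDiff hfsm j).continuous
  have hc_pdh : ∀ j, Continuous (pd j h) := fun j => (aux_pd_contDiff hhsm j).continuous
  have hc_Sj : ∀ j, Continuous (pd j (pd j f)) :=
    fun j => (aux_pd_contDiff (aux_pd_contDiff hfsm j) j).continuous
  have hc_Nf : Continuous Nf := (Complex.continuous_ofReal.comp hc_f.norm).pow _
  have hc_Vc : Continuous Vc := Complex.continuous_ofReal.comp hWsm.continuous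
  have hc_S : Continuous S := continuous_finset_sum _ (fun j _ => hc_Sj j)
  have hc_A : Continuous A := hc_S.sub (hc_Nf.mul hc_f)
  have hc_cj : ∀ {φ : Eucl n → ℂ}, Continuous φ → Continuous (fun z => (starRingEnd ℂ) (φ z)) :=
    fun hφ => Complex.continuous_conj.comp hφ
  have hc_Vd : ∀ j : Fin n, Continuous (fun z => ((fderiv ℝ W z (EuclideanSpace.single j 1) : ℝ) : ℂ)) := by
    intro j
    apply Complex.continuous_ofReal.comp
    exact (hWsm.continuous_fderiv (by simp)).clm_apply continuous_const
  -- norm bounds for auxiliary functions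
  have hbNf : ∀ z, ‖Nf z‖ ≤ C0 ^ (p - 1) := by
    intro z
    rw [hNf]
    simp only [norm_pow, Complex.norm_real, Real.norm_eq_abs, abs_norm]
    exact pow_le_pow_left₀ (norm_nonneg _) (hbf z) _
  have hbVc : ∀ z, ‖Vc z‖ ≤ CV := by
    intro z; rw [hVcdef]; simp only [Complex.norm_real, Real.norm_eq_abs]; exact (hCV z).1
  have hbVd : ∀ (j : Fin n) z, ‖((fderiv ℝ W z (EuclideanSpace.single j 1) : ℝ) : ℂ)‖ ≤ CV := by
    intro j z; simp only [Complex.norm_real, Real.norm_eq_abs]; exact (hCV z).2 j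
  have hAdec : ∀ z, ‖A z‖ ≤ ((n : ℝ) * C2 + C0 ^ (p - 1) * C0) * (1 + ‖z‖) ^ (-(n + 1 : ℝ)) := by
    intro z
    rw [hAdef]
    refine le_trans (norm_sub_le _ _) ?_
    have h1 : ‖S z‖ ≤ (n : ℝ) * C2 * (1 + ‖z‖) ^ (-(n + 1 : ℝ)) := by
      rw [hSdef]
      refine le_trans (norm_sum_le _ _) ?_
      calc ∑ j : Fin n, ‖pd j (pd j f) z‖
          ≤ ∑ _j : Fin n, C2 * (1 + ‖z‖) ^ (-(n + 1 : ℝ)) :=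
            Finset.sum_le_sum (fun j _ => hf2 j z)
        _ = (n : ℝ) * C2 * (1 + ‖z‖) ^ (-(n + 1 : ℝ)) := by
            rw [Finset.sum_const, Finset.card_univ, Fintype.card_fin, nsmul_eq_mul]; ring
    have h2 : ‖Nf z * f z‖ ≤ C0 ^ (p - 1) * C0 * (1 + ‖z‖) ^ (-(n + 1 : ℝ)) := by
      rw [norm_mul]
      calc ‖Nf z‖ * ‖f z‖ ≤ C0 ^ (p - 1) * (C0 * (1 + ‖z‖) ^ (-(n + 1 : ℝ))) :=
            mul_le_mul (hbNf z) (hf0 z) (norm_nonneg _) (by positivity)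
        _ = C0 ^ (p - 1) * C0 * (1 + ‖z‖) ^ (-(n + 1 : ℝ)) := by ring
    linarith
  set CA : ℝ := (n : ℝ) * C2 + C0 ^ (p - 1) * C0 with hCA
  have hCAn : 0 ≤ CA := by rw [hCA]; positivity
  have hbA : ∀ z, ‖A z‖ ≤ CA := hbd hCAn hAdec
  -- differentiability
  have hd_f : Differentiable ℝ f := hfsm.differentiable (by simp)
  have hd_h : Differentiable ℝ h := hhsm.differentiable (by simp)
  have hd_pdf : ∀ j, Differentiable ℝ (pd j f) :=
    fun j => (aux_pd_contDiff hfsm j).differentiable (by simp)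
  have hd_cpdf : ∀ j, Differentiable ℝ (fun z => (starRingEnd ℂ) (pd j f z)) :=
    fun j => aux_conj_diff (hd_pdf j)
  have hd_Vc : Differentiable ℝ Vc := aux_ofReal_diff (hWsm.differentiable (by simp))
  have hd_Vcf : Differentiable ℝ (fun z => Vc z * f z) := hd_Vc.mul hd_f
  -- integrability
  have Ia : ∀ j : Fin n, Integrable (fun z => (starRingEnd ℂ) (pd j f z) * pd j h z)
      (volume : Measure (Eucl n)) := by
    intro j
    refine aux_int_mul (Ca := C1) (hc_cj (hc_pdf j)) (hc_pdh j) (fun z => ?_) (hbh1 j)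
    rw [RCLike.norm_conj]; exact hf1 j z
  have Ib : ∀ j : Fin n, Integrable (fun z => (starRingEnd ℂ) (pd j (pd j f) z) * h z)
      (volume : Measure (Eucl n)) := by
    intro j
    refine aux_int_mul (Ca := C2) (hc_cj (hc_Sj j)) hc_h (fun z => ?_) hbh
    rw [RCLike.norm_conj]; exact hf2 j z
  have Ic : ∀ j : Fin n, Integrable (fun z => (starRingEnd ℂ) (pd j f z) * h z)
      (volume : Measure (Eucl n)) := by
    intro j
    refine aux_int_mul (Ca := C1) (hc_cj (hc_pdf j)) hc_h (fun z => ?_) hbh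
    rw [RCLike.norm_conj]; exact hf1 j z
  have In : Integrable (fun z => Nf z * ((starRingEnd ℂ) (f z) * h z))
      (volume : Measure (Eucl n)) := by
    have := aux_int_mul (Ca := C0 * D0) (Cb := C0 ^ (p - 1))
      ((hc_cj hc_f).fun_mul hc_h) hc_Nf
      (fun z => by
        rw [norm_mul, RCLike.norm_conj]
        calc ‖f z‖ * ‖h z‖ ≤ (C0 * (1 + ‖z‖) ^ (-(n + 1 : ℝ))) * D0 :=
              mul_le_mul (hf0 z) (hbh z) (norm_nonneg _) (by positivity)
          _ = C0 * D0 * (1 + ‖z‖) ^ (-(n + 1 : ℝ)) := by ring)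
      hbNf
    have heq2 : (fun z => (starRingEnd ℂ) (f z) * h z * Nf z)
        = fun z => Nf z * ((starRingEnd ℂ) (f z) * h z) := by
      funext z; ring
    rwa [heq2] at this
  have Ih : Integrable (fun z => (starRingEnd ℂ) (A z) * h z) (volume : Measure (Eucl n)) := by
    refine aux_int_mul (Ca := CA) (hc_cj hc_A) hc_h (fun z => ?_) hbh
    rw [RCLike.norm_conj]; exact hAdec z
  have Ii : Integrable (fun z => (starRingEnd ℂ) (A z) * A z) (volume : Measure (Eucl n)) := by
    refine aux_int_mul (Ca := CA) (hc_cj hc_A) hc_A (fun z => ?_) hbA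
    rw [RCLike.norm_conj]; exact hAdec z
  have Ij : Integrable (fun z => (starRingEnd ℂ) (A z) * (Vc z * f z))
      (volume : Measure (Eucl n)) := by
    refine aux_int_mul (Ca := CA) (Cb := CV * C0) (hc_cj hc_A) (hc_Vc.mul hc_f) (fun z => ?_) (fun z => ?_)
    · rw [RCLike.norm_conj]; exact hAdec z
    · rw [norm_mul]
      exact mul_le_mul (hbVc z) (hbf z) (norm_nonneg _) hCVn
  have Ik : ∀ j : Fin n, Integrable (fun z => (starRingEnd ℂ) (pd j (pd j f) z) * (Vc z * f z))
      (volume : Measure (Eucl n)) := by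
    intro j
    refine aux_int_mul (Ca := C2) (Cb := CV * C0) (hc_cj (hc_Sj j)) (hc_Vc.mul hc_f) (fun z => ?_) (fun z => ?_)
    · rw [RCLike.norm_conj]; exact hf2 j z
    · rw [norm_mul]
      exact mul_le_mul (hbVc z) (hbf z) (norm_nonneg _) hCVn
  have Il : Integrable (fun z => Nf z * (starRingEnd ℂ) (f z) * (Vc z * f z))
      (volume : Measure (Eucl n)) := by
    have := aux_int_mul (Ca := C0) (Cb := C0 ^ (p - 1) * CV * C0)
      (hc_cj hc_f) ((hc_Nf.fun_mul hc_Vc).fun_mul hc_f)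
      (fun z => by rw [RCLike.norm_conj]; exact hf0 z)
      (fun z => by
        rw [norm_mul, norm_mul]
        refine mul_le_mul (mul_le_mul (hbNf z) (hbVc z) (norm_nonneg _) (by positivity))
          (hbf z) (norm_nonneg _) (by positivity))
    have heq2 : (fun z => (starRingEnd ℂ) (f z) * (Nf z * Vc z * f z))
        = fun z => Nf z * (starRingEnd ℂ) (f z) * (Vc z * f z) := by
      funext z; ring
    rwa [heq2] at this
  have Id : ∀ j : Fin n, Integrable
      (fun z => ((fderiv ℝ W z (EuclideanSpace.single j 1) : ℝ) : ℂ) * f z * (starRingEnd ℂ) (pd j f z))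
      (volume : Measure (Eucl n)) := by
    intro j
    have := aux_int_mul (Ca := CV * C0) (Cb := C1)
      ((hc_Vd j).fun_mul hc_f) (hc_cj (hc_pdf j))
      (fun z => by
        rw [norm_mul]
        calc ‖((fderiv ℝ W z (EuclideanSpace.single j 1) : ℝ) : ℂ)‖ * ‖f z‖
            ≤ CV * (C0 * (1 + ‖z‖) ^ (-(n + 1 : ℝ))) :=
              mul_le_mul (hbVd j z) (hf0 z) (norm_nonneg _) hCVn
          _ = CV * C0 * (1 + ‖z‖) ^ (-(n + 1 : ℝ)) := by ring)
      (fun z => by rw [RCLike.norm_conj]; exact hbf1 j z)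
    exact this
  have Ie : ∀ j : Fin n, Integrable (fun z => Vc z * pd j f z * (starRingEnd ℂ) (pd j f z))
      (volume : Measure (Eucl n)) := by
    intro j
    have := aux_int_mul (Ca := CV * C1) (Cb := C1)
      (hc_Vc.fun_mul (hc_pdf j)) (hc_cj (hc_pdf j))
      (fun z => by
        rw [norm_mul]
        calc ‖Vc z‖ * ‖pd j f z‖ ≤ CV * (C1 * (1 + ‖z‖) ^ (-(n + 1 : ℝ))) :=
              mul_le_mul (hbVc z) (hf1 j z) (norm_nonneg _) hCVn
          _ = CV * C1 * (1 + ‖z‖) ^ (-(n + 1 : ℝ)) := by ring)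
      (fun z => by rw [RCLike.norm_conj]; exact hbf1 j z)
    exact this
  have If2 : ∀ j : Fin n, Integrable
      (fun z => Vc z * f z * (starRingEnd ℂ) (pd j (pd j f) z)) (volume : Measure (Eucl n)) := by
    intro j
    have := aux_int_mul (Ca := CV * C0) (Cb := C2)
      (hc_Vc.fun_mul hc_f) (hc_cj (hc_Sj j))
      (fun z => by
        rw [norm_mul]
        calc ‖Vc z‖ * ‖f z‖ ≤ CV * (C0 * (1 + ‖z‖) ^ (-(n + 1 : ℝ))) :=
              mul_le_mul (hbVc z) (hf0 z) (norm_nonneg _) hCVn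
          _ = CV * C0 * (1 + ‖z‖) ^ (-(n + 1 : ℝ)) := by ring)
      (fun z => by rw [RCLike.norm_conj]; exact hbf2 j z)
    exact this
  have Ig : ∀ j : Fin n, Integrable (fun z => Vc z * f z * (starRingEnd ℂ) (pd j f z))
      (volume : Measure (Eucl n)) := by
    intro j
    have := aux_int_mul (Ca := CV * C0) (Cb := C1)
      (hc_Vc.fun_mul hc_f) (hc_cj (hc_pdf j))
      (fun z => by
        rw [norm_mul]
        calc ‖Vc z‖ * ‖f z‖ ≤ CV * (C0 * (1 + ‖z‖) ^ (-(n + 1 : ℝ))) :=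
              mul_le_mul (hbVc z) (hf0 z) (norm_nonneg _) hCVn
          _ = CV * C0 * (1 + ‖z‖) ^ (-(n + 1 : ℝ)) := by ring)
      (fun z => by rw [RCLike.norm_conj]; exact hbf1 j z)
    exact this
  -- conjugation of Nf is itself
  have hNfconj : ∀ z, (starRingEnd ℂ) (Nf z) = Nf z := by
    intro z; simp only [hNf, map_pow, Complex.conj_ofReal]
  -- helper: real/im parts of integrals
  have aux_integral_re : ∀ {c : Eucl n → ℂ}, Integrable c (volume : Measure (Eucl n)) →
      ∫ z : Eucl n, (c z).re = (∫ z : Eucl n, c z).re := by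
    intro c hc
    simpa using integral_re (𝕜 := ℂ) hc
  have aux_integral_ofReal : ∀ g : Eucl n → ℝ,
      (∫ z : Eucl n, ((g z : ℝ) : ℂ)) = (((∫ z : Eucl n, g z) : ℝ) : ℂ) := by
    intro g
    simpa using integral_ofReal (𝕜 := ℂ) (f := g) (μ := (volume : Measure (Eucl n)))
  -- STEP L1
  have L1 : (1/2 : ℝ) * (∫ z : Eucl n, ∑ j, 2 * ((starRingEnd ℂ) (pd j f z) * pd j h z).re)
      = ∑ j : Fin n, (∫ z : Eucl n, (starRingEnd ℂ) (pd j f z) * pd j h z).re := by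
    rw [show (∫ z : Eucl n, ∑ j, 2 * ((starRingEnd ℂ) (pd j f z) * pd j h z).re)
        = ∑ j : Fin n, ∫ z : Eucl n, 2 * ((starRingEnd ℂ) (pd j f z) * pd j h z).re
      from integral_finset_sum _ (fun j _ => ((Ia j).re.const_mul 2)), Finset.mul_sum]
    apply Finset.sum_congr rfl
    intro j _
    rw [integral_const_mul, ← aux_integral_re (Ia j)]
    ring
  -- STEP L2
  have L2 : (1/((p : ℝ)+1)) * (∫ z : Eucl n, ((p : ℝ) + 1) * ‖f z‖ ^ (p - 1) *
        ((starRingEnd ℂ) (f z) * h z).re)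
      = (∫ z : Eucl n, Nf z * ((starRingEnd ℂ) (f z) * h z)).re := by
    have e1 : (fun z : Eucl n => ((p : ℝ)+1) * ‖f z‖ ^ (p - 1) *
          ((starRingEnd ℂ) (f z) * h z).re)
        = fun z => ((p : ℝ)+1) * (Nf z * ((starRingEnd ℂ) (f z) * h z)).re := by
      funext z
      simp only [hNf]
      rw [← Complex.ofReal_pow, Complex.re_ofReal_mul]
      ring
    rw [e1, integral_const_mul, ← aux_integral_re In, ← mul_assoc]
    have : (1/((p : ℝ)+1)) * ((p : ℝ)+1) = 1 := by
      have : ((p : ℝ)+1) ≠ 0 := by positivity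
      field_simp
    rw [this, one_mul]
  -- STEP 1 : integration by parts in the kinetic term
  have step1 : ∀ j : Fin n, (∫ z : Eucl n, (starRingEnd ℂ) (pd j f z) * pd j h z)
      = - ∫ z : Eucl n, (starRingEnd ℂ) (pd j (pd j f) z) * h z := by
    intro j
    have heqc : (fun z : Eucl n =>
          fderiv ℝ (fun w => (starRingEnd ℂ) (pd j f w)) z (EuclideanSpace.single j 1) * h z)
        = fun z => (starRingEnd ℂ) (pd j (pd j f) z) * h z := by
      funext z; rw [aux_fderiv_conj (hd_pdf j) z]; simp only [pd]
    have hibp := aux_ibp (a := fun z => (starRingEnd ℂ) (pd j f z)) (b := h)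
      (hd_cpdf j) hd_h j (by rw [heqc]; exact Ib j) (Ia j) (Ic j)
    calc (∫ z : Eucl n, (starRingEnd ℂ) (pd j f z) * pd j h z)
        = ∫ z : Eucl n, (starRingEnd ℂ) (pd j f z) *
            fderiv ℝ h z (EuclideanSpace.single j 1) := rfl
      _ = - ∫ z : Eucl n, fderiv ℝ (fun w => (starRingEnd ℂ) (pd j f w)) z
            (EuclideanSpace.single j 1) * h z := hibp
      _ = - ∫ z : Eucl n, (starRingEnd ℂ) (pd j (pd j f) z) * h z := by rw [heqc]
  -- Integrability of conj S * h
  have hIS : Integrable (fun z => (starRingEnd ℂ) (S z) * h z) (volume : Measure (Eucl n)) := by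
    have e1 : (fun z => (starRingEnd ℂ) (S z) * h z)
        = fun z => ∑ j : Fin n, (starRingEnd ℂ) (pd j (pd j f) z) * h z := by
      funext z; simp only [hSdef]; rw [map_sum, Finset.sum_mul]
    rw [e1]
    exact integrable_finset_sum _ (fun j _ => Ib j)
  -- kinetic sum rewritten
  have K1 : ∑ j : Fin n, (∫ z : Eucl n, (starRingEnd ℂ) (pd j f z) * pd j h z).re
      = (- ∫ z : Eucl n, (starRingEnd ℂ) (S z) * h z).re := by
    have hsum2 : ∑ j : Fin n, (∫ z : Eucl n, (starRingEnd ℂ) (pd j (pd j f) z) * h z)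
        = ∫ z : Eucl n, (starRingEnd ℂ) (S z) * h z := by
      rw [← integral_finset_sum _ (fun j _ => Ib j)]
      congr 1; funext z
      simp only [hSdef]; rw [map_sum, Finset.sum_mul]
    calc ∑ j : Fin n, (∫ z : Eucl n, (starRingEnd ℂ) (pd j f z) * pd j h z).re
        = ∑ j : Fin n, (- ∫ z : Eucl n, (starRingEnd ℂ) (pd j (pd j f) z) * h z).re := by
          apply Finset.sum_congr rfl; intro j _; rw [step1 j]
      _ = (∑ j : Fin n, - ∫ z : Eucl n, (starRingEnd ℂ) (pd j (pd j f) z) * h z).re := by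
          rw [Complex.re_sum]
      _ = (- ∫ z : Eucl n, (starRingEnd ℂ) (S z) * h z).re := by
          rw [Finset.sum_neg_distrib, hsum2]
  -- combine the two contributions
  have comb : (- ∫ z : Eucl n, (starRingEnd ℂ) (S z) * h z).re
      + (∫ z : Eucl n, Nf z * ((starRingEnd ℂ) (f z) * h z)).re
      = -(∫ z : Eucl n, (starRingEnd ℂ) (A z) * h z).re := by
    have e1 : (fun z : Eucl n => (starRingEnd ℂ) (A z) * h z)
        = fun z => (starRingEnd ℂ) (S z) * h z - Nf z * ((starRingEnd ℂ) (f z) * h z) := by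
      funext z
      simp only [hAdef]
      rw [map_sub, map_mul, hNfconj z]
      ring
    rw [e1, integral_sub hIS In]
    simp [Complex.sub_re, Complex.neg_re]
    ring
  -- the equation: compute the integral ∫ conj A * h
  have hP : (∫ z : Eucl n, (starRingEnd ℂ) (A z) * h z)
      = Complex.I * (∫ z : Eucl n, (starRingEnd ℂ) (A z) * A z)
        - Complex.I * (∫ z : Eucl n, (starRingEnd ℂ) (A z) * (Vc z * f z)) := by
    have e1 : (fun z : Eucl n => (starRingEnd ℂ) (A z) * h z)
        = fun z => Complex.I * ((starRingEnd ℂ) (A z) * A z)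
          - Complex.I * ((starRingEnd ℂ) (A z) * (Vc z * f z)) := by
      funext z; rw [heq z]; ring
    rw [e1, integral_sub (Ii.const_mul _) (Ij.const_mul _),
      integral_const_mul, integral_const_mul]
  have hQ1 : (∫ z : Eucl n, (starRingEnd ℂ) (A z) * A z)
      = (((∫ z : Eucl n, ‖A z‖ ^ 2) : ℝ) : ℂ) := by
    have e1 : (fun z : Eucl n => (starRingEnd ℂ) (A z) * A z)
        = fun z => ((‖A z‖ ^ 2 : ℝ) : ℂ) := by
      funext z; rw [Complex.conj_mul']; push_cast; ring
    rw [e1, aux_integral_ofReal]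
  have hRe : -(∫ z : Eucl n, (starRingEnd ℂ) (A z) * h z).re
      = -(∫ z : Eucl n, (starRingEnd ℂ) (A z) * (Vc z * f z)).im := by
    rw [hP, hQ1]
    simp [Complex.sub_re, Complex.mul_re, Complex.I_re, Complex.I_im,
      Complex.ofReal_re, Complex.ofReal_im]
  -- split Q2
  have hQ2 : (∫ z : Eucl n, (starRingEnd ℂ) (A z) * (Vc z * f z)).im
      = ∑ j : Fin n, (∫ z : Eucl n, (starRingEnd ℂ) (pd j (pd j f) z) * (Vc z * f z)).im := by
    have e1 : (fun z : Eucl n => (starRingEnd ℂ) (A z) * (Vc z * f z))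
        = fun z => (∑ j : Fin n, (starRingEnd ℂ) (pd j (pd j f) z) * (Vc z * f z))
          - Nf z * (starRingEnd ℂ) (f z) * (Vc z * f z) := by
      funext z
      simp only [hAdef, hSdef]
      rw [map_sub, map_mul, hNfconj z, map_sum, sub_mul, Finset.sum_mul]
    have him0 : (∫ z : Eucl n, Nf z * (starRingEnd ℂ) (f z) * (Vc z * f z)).im = 0 := by
      have e2 : (fun z : Eucl n => Nf z * (starRingEnd ℂ) (f z) * (Vc z * f z))
          = fun z => ((‖f z‖ ^ (p-1) * (W z * ‖f z‖ ^ 2) : ℝ) : ℂ) := by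
        funext z
        have e3 : Nf z * (starRingEnd ℂ) (f z) * (Vc z * f z)
            = Nf z * Vc z * ((starRingEnd ℂ) (f z) * f z) := by ring
        rw [e3, Complex.conj_mul']
        simp only [hNf, hVcdef]
        push_cast
        ring
      rw [e2, aux_integral_ofReal]
      exact Complex.ofReal_im _
    rw [e1, integral_sub (integrable_finset_sum _ (fun j _ => Ik j)) Il, Complex.sub_im,
      him0, sub_zero, integral_finset_sum _ (fun j _ => Ik j), Complex.im_sum]
  -- STEP 2 : second integration by parts
  have step2 : ∀ j : Fin n, (∫ z : Eucl n, (starRingEnd ℂ) (pd j (pd j f) z) * (Vc z * f z))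
      = -(∫ z : Eucl n, ((fderiv ℝ W z (EuclideanSpace.single j 1) : ℝ) : ℂ) * f z *
            (starRingEnd ℂ) (pd j f z))
        - ∫ z : Eucl n, Vc z * pd j f z * (starRingEnd ℂ) (pd j f z) := by
    intro j
    have heqc : (fun z : Eucl n => (Vc z * f z) *
          fderiv ℝ (fun w => (starRingEnd ℂ) (pd j f w)) z (EuclideanSpace.single j 1))
        = fun z => (starRingEnd ℂ) (pd j (pd j f) z) * (Vc z * f z) := by
      funext z; rw [aux_fderiv_conj (hd_pdf j) z]; simp only [pd]; ring
    have heqd : (fun z : Eucl n =>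
          fderiv ℝ (fun w => Vc w * f w) z (EuclideanSpace.single j 1) *
            (starRingEnd ℂ) (pd j f z))
        = fun z => ((fderiv ℝ W z (EuclideanSpace.single j 1) : ℝ) : ℂ) * f z *
            (starRingEnd ℂ) (pd j f z)
          + Vc z * pd j f z * (starRingEnd ℂ) (pd j f z) := by
      funext z
      rw [aux_fderiv_mul hd_Vc hd_f z]
      rw [show fderiv ℝ Vc z (EuclideanSpace.single j 1)
          = ((fderiv ℝ W z (EuclideanSpace.single j 1) : ℝ) : ℂ) by
        rw [hVcdef]; exact aux_fderiv_ofReal (hWsm.differentiable (by simp)) z _]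
      simp only [pd]
      ring
    have hibp := aux_ibp (a := fun z => Vc z * f z)
      (b := fun z => (starRingEnd ℂ) (pd j f z)) hd_Vcf (hd_cpdf j) j
      (by rw [heqd]; exact (Id j).add (Ie j)) (by rw [heqc]; exact Ik j) (Ig j)
    calc (∫ z : Eucl n, (starRingEnd ℂ) (pd j (pd j f) z) * (Vc z * f z))
        = ∫ z : Eucl n, (Vc z * f z) *
            fderiv ℝ (fun w => (starRingEnd ℂ) (pd j f w)) z (EuclideanSpace.single j 1) := by
          rw [heqc]
      _ = - ∫ z : Eucl n, fderiv ℝ (fun w => Vc w * f w) z (EuclideanSpace.single j 1) *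
            (starRingEnd ℂ) (pd j f z) := hibp
      _ = - ∫ z : Eucl n, (((fderiv ℝ W z (EuclideanSpace.single j 1) : ℝ) : ℂ) * f z *
            (starRingEnd ℂ) (pd j f z)
          + Vc z * pd j f z * (starRingEnd ℂ) (pd j f z)) := by rw [heqd]
      _ = -(∫ z : Eucl n, ((fderiv ℝ W z (EuclideanSpace.single j 1) : ℝ) : ℂ) * f z *
            (starRingEnd ℂ) (pd j f z))
          - ∫ z : Eucl n, Vc z * pd j f z * (starRingEnd ℂ) (pd j f z) := by
          rw [integral_add (Id j) (Ie j)]; ring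
  have him2 : ∀ j : Fin n, (∫ z : Eucl n, Vc z * pd j f z * (starRingEnd ℂ) (pd j f z)).im = 0 := by
    intro j
    have e2 : (fun z : Eucl n => Vc z * pd j f z * (starRingEnd ℂ) (pd j f z))
        = fun z => ((W z * ‖pd j f z‖ ^ 2 : ℝ) : ℂ) := by
      funext z
      have e3 : Vc z * pd j f z * (starRingEnd ℂ) (pd j f z)
          = Vc z * ((starRingEnd ℂ) (pd j f z) * pd j f z) := by ring
      rw [e3, Complex.conj_mul']; simp only [hVcdef]; push_cast; ring
    rw [e2, aux_integral_ofReal]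
    exact Complex.ofReal_im _
  -- FINAL ASSEMBLY
  rw [L1, L2, K1, comb, hRe, hQ2, ← Finset.sum_neg_distrib]
  apply Finset.sum_congr rfl
  intro j _
  rw [step2 j]
  simp [Complex.sub_im, Complex.neg_im, him2 j]

end Aux7

/-- for a Schwartz-class solution with `V` continuous, smooth in `z`,
and with `V` and its first `z`-derivatives bounded, the energy is differentiable with
`E′(t) = Σ_j Im ∫ ∂_{z_j}V(t,z) · u(t,z) · conj(∂_{z_j}u(t,z)) dz`. -/
theorem stmt11 (n p : ℕ) (hnp : DimCond n p)
    (V : ℝ → Eucl n → ℝ) (hVc : Continuous fun q : ℝ × Eucl n => V q.1 q.2)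
    (hVsm : ∀ t, ContDiff ℝ (⊤ : ℕ∞) (V t))
    (hVbd : ∃ C : ℝ, ∀ t z, |V t z| ≤ C ∧
      ∀ j : Fin n, |fderiv ℝ (V t) z (EuclideanSpace.single j 1)| ≤ C)
    (u : ℝ → Eucl n → ℂ) (hu : IsNLSSolution n p V u) :
    ∀ t : ℝ, HasDerivAt (energy n p u)
      (∑ j : Fin n, (∫ z : Eucl n,
        ((fderiv ℝ (V t) z (EuclideanSpace.single j 1) : ℝ) : ℂ) * u t z *
          (starRingEnd ℂ) (pd j (u t) z)).im) t := by
  obtain ⟨hodd, hcase⟩ := hnp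
  have hp3 : 3 ≤ p := by rcases hcase with ⟨_, h⟩ | ⟨_, h⟩ | ⟨_, h⟩ <;> omega
  obtain ⟨CVb, hCVb⟩ := hVbd
  intro t
  have hkin := aux_kinetic hu t
  have hpot := aux_potential hu hodd hp3 t
  have hsum := HasDerivAt.add (hkin.const_mul ((1:ℝ)/2))
    (hpot.const_mul ((1:ℝ)/((p:ℝ)+1)))
  have hdec : ∀ m l : ℕ, ∃ C : ℝ, ∀ z : Eucl n,
      ‖z‖ ^ m * ‖iteratedFDeriv ℝ l (u t) z‖ ≤ C ∧
      ‖z‖ ^ m * ‖iteratedFDeriv ℝ l (fun z => deriv (fun s => u s z) t) z‖ ≤ C := by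
    intro m l
    obtain ⟨C, hC⟩ := hu.locUnifBound m l {t} isCompact_singleton
    exact ⟨C, fun z => hC t rfl z⟩
  have hE := aux_partII (p := p) hodd hp3
    (f := u t) (h := fun z => deriv (fun s => u s z) t) (W := V t)
    (aux_slice_contDiff hu.smooth t) (aux_ut_contDiff hu.smooth t) (hVsm t)
    (CV := CVb) (fun z => hCVb t z) hdec (fun z => hu.eqn t z)
  rw [show (energy n p u) = fun t => (1/2 : ℝ) *
      (∫ z : Eucl n, ∑ j, ‖pd j (u t) z‖ ^ 2)
      + (1/((p:ℝ)+1)) * ∫ z : Eucl n, ‖u t z‖ ^ (p + 1) from rfl, ← hE]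
  exact hsum
end
end
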